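/- arXiv:1610.07517 — 7 statements merged into one kernel-verified Lean document; each statement's English description precedes it below -/
import Mathlib

section
/- Every closed set M ⊆ S¹ can be written in a unique way as a disjoint union M = 𝓘 ∪ K ∪ N, where 𝓘 is the union of the connected components of the interior of M, K is a maximal Cantor set contained in M \ 𝓘 (maximal: any Cantor set K₁ with K ⊆ K₁ ⊆ M \ 𝓘 equals K), and N is countable. -/
open Set Topology Filter

/-- The circle. -/
abbrev S1 := AddCircle (1 : ℝ)

/-- Apply a word `l = [i₁, …, i_k]` of generators: `f i₁ ∘ ⋯ ∘ f i_k`. -/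
def applyWord {X : Type*} {n : ℕ} (f : Fin n → X → X) (l : List (Fin n)) (x : X) : X :=
  l.foldr (fun i y => f i y) x

/-- The orbit of `x` under the semigroup `IFS(f₁,…,fₙ)` (nonempty words). -/
def orbitIFS {X : Type*} {n : ℕ} (f : Fin n → X → X) (x : X) : Set X :=
  {y | ∃ l : List (Fin n), l ≠ [] ∧ y = applyWord f l x}

/-- `M` is a minimal set for the IFS generated by `f₁,…,fₙ`. -/
def IsMinimalIFS {X : Type*} [TopologicalSpace X] {n : ℕ} (f : Fin n → X → X)
    (M : Set X) : Prop :=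
  M.Nonempty ∧ IsClosed M ∧ (∀ i, f i '' M ⊆ M) ∧
    ∀ x ∈ M, closure (orbitIFS f x) = M

/-- A Cantor set: nonempty, compact, perfect and totally disconnected. -/
def IsCantorSet {X : Type*} [TopologicalSpace X] (K : Set X) : Prop :=
  K.Nonempty ∧ IsCompact K ∧ Perfect K ∧ IsTotallyDisconnected K

/-- `X` is (homeomorphic to) the circle or a (nondegenerate) closed interval. -/
def IsCircleOrInterval (X : Type*) [TopologicalSpace X] : Prop :=
  Nonempty (X ≃ₜ S1) ∨ ∃ a b : ℝ, a < b ∧ Nonempty (X ≃ₜ Set.Icc a b)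

/-- The canonical decomposition `M = 𝓘 ∪ K ∪ N` of a closed set:
`𝓘` is the interior (union of components of the interior), `K` is the maximal
Cantor set contained in `M \ 𝓘` (possibly empty), and `N` is the countable remainder. -/
def IsCanonicalDecomp {X : Type*} [TopologicalSpace X] (M I K N : Set X) : Prop :=
  I = interior M ∧
  (IsCantorSet K ∨ K = ∅) ∧
  K ⊆ M \ I ∧
  (∀ K₁ : Set X, IsCantorSet K₁ → K ⊆ K₁ → K₁ ⊆ M \ I → K₁ = K) ∧
  N = M \ (I ∪ K) ∧
  N.Countable

/-- A symmetric Cantorval: a nonempty compact set which is the closure of its interior,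
and such that both endpoints of every nontrivial connected component are accumulation
points of one-point connected components. -/
def IsSymmetricCantorval {X : Type*} [TopologicalSpace X] (M : Set X) : Prop :=
  M.Nonempty ∧ IsCompact M ∧ M = closure (interior M) ∧
  ∀ x ∈ M, ¬ (connectedComponentIn M x).Subsingleton →
    ∀ z ∈ frontier (connectedComponentIn M x),
      AccPt z (𝓟 {y | y ∈ M ∧ connectedComponentIn M y = {y}})



section Cond
variable {α : Type*} [TopologicalSpace α]

/-- Condensation points of `B`. -/
def condPts (B : Set α) : Set α := {x | ∀ U ∈ 𝓝 x, ¬ (U ∩ B).Countable}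

lemma condPts_subset {B : Set α} (hB : IsClosed B) : condPts B ⊆ B := by
  intro x hx
  by_contra h
  exact hx Bᶜ (hB.isOpen_compl.mem_nhds h)
    (by rw [compl_inter_self]; exact countable_empty)

lemma isClosed_condPts (B : Set α) : IsClosed (condPts B) := by
  rw [← isOpen_compl_iff, isOpen_iff_mem_nhds]
  intro x hx
  simp only [condPts, mem_compl_iff, mem_setOf_eq, not_forall] at hx
  push_neg at hx
  obtain ⟨U, hU, hUc⟩ := hx
  obtain ⟨V, hVU, hVopen, hxV⟩ := mem_nhds_iff.mp hU
  refine Filter.mem_of_superset (hVopen.mem_nhds hxV) (fun y hy hyc => ?_)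
  exact hyc V (hVopen.mem_nhds hy) (Countable.mono (inter_subset_inter_left _ hVU) hUc)

lemma countable_diff_condPts [SecondCountableTopology α] (B : Set α) :
    (B \ condPts B).Countable := by
  obtain ⟨b, bct, -, bbasis⟩ := TopologicalSpace.exists_countable_basis α
  have hsub : B \ condPts B ⊆ ⋃ U ∈ {U ∈ b | (U ∩ B).Countable}, U ∩ B := by
    rintro x ⟨hxB, hx⟩
    simp only [condPts, mem_setOf_eq, not_forall] at hx
    push_neg at hx
    obtain ⟨U, hU, hUc⟩ := hx
    obtain ⟨V, hVb, hxV, hVU⟩ := bbasis.mem_nhds_iff.mp hU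
    exact mem_biUnion ⟨hVb, Countable.mono (inter_subset_inter_left _ hVU) hUc⟩ ⟨hxV, hxB⟩
  exact Countable.mono hsub
    ((Countable.mono (sep_subset _ _) bct).biUnion fun U hU => hU.2)

lemma preperfect_condPts [SecondCountableTopology α] (B : Set α) :
    Preperfect (condPts B) := by
  intro x hx
  rw [accPt_iff_nhds]
  intro U hU
  by_contra h
  push_neg at h
  have hc : (U ∩ condPts B).Countable :=
    Countable.mono (fun y hy => mem_singleton_iff.mpr (h y hy)) (countable_singleton x)
  refine hx U hU (Countable.mono (fun y hy => ?_) (hc.union (countable_diff_condPts B)))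
  by_cases hy' : y ∈ condPts B
  · exact Or.inl ⟨hy.1, hy'⟩
  · exact Or.inr ⟨hy.2, hy'⟩

end Cond

lemma uncountable_of_perfect_nonempty {α : Type*} [MetricSpace α] [CompleteSpace α]
    {C : Set α} (hC : Perfect C) (hne : C.Nonempty) : ¬ C.Countable := by
  intro hcnt
  obtain ⟨f, hfC, -, hf⟩ := hC.exists_nat_bool_injection hne
  have h1 : (Set.range f).Countable := Countable.mono hfC hcnt
  have h2 : Countable (ℕ → Bool) := by
    have := h1.to_subtype
    exact Countable.of_equiv _ (Equiv.ofInjective f hf).symm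
  have e : Set ℕ ≃ (ℕ → Bool) := Equiv.arrowCongr (Equiv.refl ℕ) Equiv.propEquivBool
  have h3 : Countable (Set ℕ) := Countable.of_equiv _ e.symm
  obtain ⟨g, hg⟩ := Countable.exists_injective_nat (Set ℕ)
  exact Function.cantor_injective g hg

lemma perfect_subset_condPts {α : Type*} [MetricSpace α] [CompleteSpace α] {C B : Set α}
    (hC : Perfect C) (hCB : C ⊆ B) : C ⊆ condPts B := by
  intro x hxC U hU hUc
  obtain ⟨V, hVnhds, hVclosed, hVU⟩ := exists_mem_nhds_isClosed_subset hU
  have hxW : x ∈ interior V := mem_interior_iff_mem_nhds.mpr hVnhds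
  obtain ⟨hperf, hne⟩ := hC.closure_nhds_inter x hxC hxW isOpen_interior
  have hsub : closure (interior V ∩ C) ⊆ U ∩ B := by
    intro y hy
    have h1 : y ∈ V := hVclosed.closure_subset_iff.mpr
      ((inter_subset_left).trans interior_subset) hy
    have h2 : y ∈ C := hC.closed.closure_subset_iff.mpr inter_subset_right hy
    exact ⟨hVU h1, hCB h2⟩
  exact uncountable_of_perfect_nonempty hperf hne (Countable.mono hsub hUc)

lemma Perfect.union' {α : Type*} [TopologicalSpace α] {C D : Set α}
    (hC : Perfect C) (hD : Perfect D) : Perfect (C ∪ D) := by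
  refine ⟨hC.closed.union hD.closed, fun x hx => ?_⟩
  cases hx with
  | inl h => exact (hC.acc _ h).mono (principal_mono.mpr subset_union_left)
  | inr h => exact (hD.acc _ h).mono (principal_mono.mpr subset_union_right)

/-- Subsets of a set with empty interior in `S1` are totally disconnected. -/
lemma subsingleton_of_empty_interior {B t : Set S1} (hB : interior B = ∅)
    (htB : t ⊆ B) (ht : IsPreconnected t) : t.Subsingleton := by
  by_contra hns
  rw [Set.not_subsingleton_iff] at hns
  obtain ⟨x, hx, y, hy, hxy⟩ := hns
  obtain ⟨z, hz⟩ : ∃ z : S1, z ∉ B := by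
    by_contra h
    push_neg at h
    have : B = univ := eq_univ_of_forall h
    rw [this, interior_univ] at hB
    exact (univ_nonempty).ne_empty hB
  set θ : ℝ → S1 := fun r => (↑r : S1) + z with hθ
  have hθc : Continuous θ := by
    exact Continuous.add (AddCircle.continuous_mk' 1) continuous_const
  have hθopen : IsOpenMap θ := by
    have : θ = (Homeomorph.addRight z) ∘ (QuotientAddGroup.mk : ℝ → S1) := rfl
    rw [this]
    exact (Homeomorph.addRight z).isOpenMap.comp QuotientAddGroup.isOpenMap_coe
  set ψ : Ioo (0:ℝ) 1 → S1 := (Ioo (0:ℝ) 1).restrict θ with hψ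
  have hinj : Function.Injective ψ := by
    rintro ⟨r, hr⟩ ⟨s, hs⟩ h
    have h' : (↑r : S1) = ↑s := by
      have := add_right_cancel (a := (↑r : S1)) (b := z) (c := ↑s) h
      exact this
    have hr' : r ∈ Ico (0:ℝ) (0 + 1) := by rw [zero_add]; exact Ioo_subset_Ico_self hr
    have hs' : s ∈ Ico (0:ℝ) (0 + 1) := by rw [zero_add]; exact Ioo_subset_Ico_self hs
    exact Subtype.ext ((AddCircle.coe_eq_coe_iff_of_mem_Ico hr' hs').mp h')
  have hopenψ : IsOpenMap ψ := hθopen.restrict isOpen_Ioo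
  have hrange : t ⊆ range ψ := by
    intro w hw
    have hwz : w ≠ z := fun h => hz (h ▸ htB hw)
    obtain ⟨b, hb, hb2⟩ := AddCircle.eq_coe_Ico (w - z)
    have hb0 : b ≠ 0 := by
      rintro rfl
      apply hwz
      rw [show ((0:ℝ) : S1) = 0 by norm_num] at hb2
      rw [← sub_eq_zero]
      exact hb2.symm
    refine ⟨⟨b, lt_of_le_of_ne hb.1 (Ne.symm hb0), hb.2⟩, ?_⟩
    show θ b = w
    rw [hθ]
    simp only
    rw [hb2, sub_add_cancel]
  have hpre : IsPreconnected (ψ ⁻¹' t) := ht.preimage_of_isOpenMap hinj hopenψ hrange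
  set A : Set ℝ := Subtype.val '' (ψ ⁻¹' t) with hA
  have hApre : IsPreconnected A := hpre.image _ continuous_subtype_val.continuousOn
  obtain ⟨rx, hrx⟩ := hrange hx
  obtain ⟨ry, hry⟩ := hrange hy
  have hxA : (rx : ℝ) ∈ A := ⟨rx, by rw [mem_preimage, hrx]; exact hx, rfl⟩
  have hyA : (ry : ℝ) ∈ A := ⟨ry, by rw [mem_preimage, hry]; exact hy, rfl⟩
  have hne : (rx : ℝ) ≠ (ry : ℝ) := by
    intro h
    exact hxy (hrx ▸ hry ▸ congrArg ψ (Subtype.ext h))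
  have key : ∀ a b : ℝ, a ∈ A → b ∈ A → a < b → False := by
    intro a b haA hbA hab
    have hIcc : Icc a b ⊆ A := hApre.Icc_subset haA hbA
    have himg : θ '' Ioo a b ⊆ t := by
      rintro w ⟨r, hr, rfl⟩
      obtain ⟨⟨r', hr'⟩, hmem, hval⟩ := hIcc (Ioo_subset_Icc_self hr)
      have : r' = r := hval
      subst this
      exact hmem
    have hopen' : IsOpen (θ '' Ioo a b) := hθopen _ isOpen_Ioo
    have hne' : (θ '' Ioo a b).Nonempty :=
      ⟨θ ((a+b)/2), mem_image_of_mem _ (by constructor <;> linarith)⟩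
    have : (θ '' Ioo a b) ⊆ interior B := interior_maximal (himg.trans htB) hopen'
    rw [hB] at this
    exact hne'.ne_empty (subset_empty_iff.mp this)
  rcases lt_or_gt_of_ne hne with h | h
  · exact key _ _ hxA hyA h
  · exact key _ _ hyA hxA h


theorem stmt1 (M : Set S1) (hM : IsClosed M) :
    ∃ I K N : Set S1,
      (M = I ∪ K ∪ N ∧ Disjoint I K ∧ Disjoint I N ∧ Disjoint K N ∧
        I = interior M ∧ (IsCantorSet K ∨ K = ∅) ∧ K ⊆ M \ I ∧
        (∀ K₁ : Set S1, IsCantorSet K₁ → K ⊆ K₁ → K₁ ⊆ M \ I → K₁ = K) ∧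
        N.Countable) ∧
      ∀ I' K' N' : Set S1,
        (M = I' ∪ K' ∪ N' ∧ Disjoint I' K' ∧ Disjoint I' N' ∧ Disjoint K' N' ∧
          I' = interior M ∧ (IsCantorSet K' ∨ K' = ∅) ∧ K' ⊆ M \ I' ∧
          (∀ K₁ : Set S1, IsCantorSet K₁ → K' ⊆ K₁ → K₁ ⊆ M \ I' → K₁ = K') ∧
          N'.Countable) →
        I' = I ∧ K' = K ∧ N' = N := by
  set I : Set S1 := interior M with hIdef
  set B : Set S1 := M \ I with hBdef
  have hBclosed : IsClosed B := hM.sdiff isOpen_interior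
  have hBint : interior B = ∅ := by
    rw [← subset_empty_iff]
    intro x hx
    have h1 : x ∈ I := interior_mono diff_subset hx
    exact (interior_subset hx).2 h1
  set K : Set S1 := condPts B with hKdef
  have hKB : K ⊆ B := condPts_subset hBclosed
  set N : Set S1 := M \ (I ∪ K) with hNdef
  have hNcnt : N.Countable := by
    have : N ⊆ B \ K := by
      rintro x ⟨hxM, hx⟩
      exact ⟨⟨hxM, fun h => hx (Or.inl h)⟩, fun h => hx (Or.inr h)⟩
    exact Countable.mono this (countable_diff_condPts B)
  -- K is Cantor or empty
  have hKcantor : IsCantorSet K ∨ K = ∅ := by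
    rcases eq_empty_or_nonempty K with h | h
    · exact Or.inr h
    · refine Or.inl ⟨h, (isClosed_condPts B).isCompact, ⟨isClosed_condPts B, preperfect_condPts B⟩, ?_⟩
      intro t ht htc
      exact subsingleton_of_empty_interior hBint (ht.trans hKB) htc
  -- maximality
  have hKmax : ∀ K₁ : Set S1, IsCantorSet K₁ → K ⊆ K₁ → K₁ ⊆ M \ I → K₁ = K := by
    intro K₁ hK₁ hKK₁ hK₁B
    exact subset_antisymm (perfect_subset_condPts hK₁.2.2.1 hK₁B) hKK₁
  have hMsplit : M = I ∪ K ∪ N := by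
    apply subset_antisymm
    · intro x hx
      by_cases h1 : x ∈ I
      · exact Or.inl (Or.inl h1)
      by_cases h2 : x ∈ K
      · exact Or.inl (Or.inr h2)
      · exact Or.inr ⟨hx, fun h => h.elim h1 h2⟩
    · rintro x (⟨h | h⟩ | h)
      · exact interior_subset h
      · exact (hKB h).1
      · exact h.1
  have hdIK : Disjoint I K := disjoint_left.mpr fun x hxI hxK => (hKB hxK).2 hxI
  have hdIN : Disjoint I N := disjoint_left.mpr fun x hxI hxN => hxN.2 (Or.inl hxI)
  have hdKN : Disjoint K N := disjoint_left.mpr fun x hxK hxN => hxN.2 (Or.inr hxK)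
  refine ⟨I, K, N, ⟨hMsplit, hdIK, hdIN, hdKN, rfl, hKcantor, hKB, hKmax, hNcnt⟩, ?_⟩
  rintro I' K' N' ⟨hM', dIK', dIN', dKN', hI', hK'c, hK'B, hK'max, hN'⟩
  have hII : I' = I := hI'
  subst hII
  have hKK : K' = K := by
    apply subset_antisymm
    · rcases hK'c with h | h
      · exact perfect_subset_condPts h.2.2.1 hK'B
      · rw [h]; exact empty_subset _
    · rcases hKcantor with hK | hK
      · -- apply K'-maximality to K ∪ K'
        have hUB : K ∪ K' ⊆ M \ I := union_subset hKB hK'B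
        have hUcantor : IsCantorSet (K ∪ K') := by
          refine ⟨hK.1.mono subset_union_left, ?_, ?_, ?_⟩
          · rcases hK'c with h | h
            · exact hK.2.1.union h.2.1
            · rw [h, union_empty]; exact hK.2.1
          · rcases hK'c with h | h
            · exact hK.2.2.1.union' h.2.2.1
            · rw [h, union_empty]; exact hK.2.2.1
          · intro t ht htc
            exact subsingleton_of_empty_interior hBint (ht.trans hUB) htc
        have := hK'max (K ∪ K') hUcantor subset_union_right hUB
        exact this ▸ subset_union_left
      · rw [hK]; exact empty_subset _
  subst hKK
  refine ⟨rfl, rfl, ?_⟩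
  apply subset_antisymm
  · intro x hx
    have hxM : x ∈ M := hM' ▸ Or.inr hx
    refine ⟨hxM, fun h => ?_⟩
    cases h with
    | inl h => exact disjoint_left.mp dIN' h hx
    | inr h => exact disjoint_left.mp dKN' h hx
  · rintro x ⟨hxM, hx⟩
    rcases hM' ▸ hxM with (h | h) | h
    · exact absurd (Or.inl h) hx
    · exact absurd (Or.inr h) hx
    · exact h
end

section
/- Let f₁,…,fₙ : X → X be continuous open maps (X the circle S¹ or a closed interval) and let M be a minimal set for IFS(f₁,…,fₙ). If M is infinite, then M is uncountable. -/
open Set Topology Filter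

/-!
An open continuous self-map of the circle or of an interval has discrete fibres. If two nearby
points had the same image, the map would attain an extremum strictly between them; an open map
can do so only at an endpoint of the interval (and never on the circle, where it lifts locally to
an open real function). By continuity, points mapped to an endpoint other than `g z` cannot
accumulate at `z`.

A map with discrete fibres sends accumulation points of `M` to accumulation points of its image.
Hence the derived set of a minimal set `M` is closed and invariant, and nonempty when `M` is
infinite (by compactness); minimality makes it all of `M`. So `M` is a nonempty perfect compact
set, which Baire's theorem forbids to be countable.
-/

def HasDiscreteFibers {X Y : Type*} [TopologicalSpace X] (g : X → Y) : Prop :=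
  ∀ x, ∀ᶠ x' in 𝓝[≠] x, g x' ≠ g x

section Fibers

variable {X Y Z : Type*} [TopologicalSpace X] {g : X → Y}

theorem AccPt.map_of_hasDiscreteFibers [TopologicalSpace Y] {x : X} {s : Set X}
    (h : AccPt x (𝓟 s)) (hg : ContinuousAt g x) (hfib : HasDiscreteFibers g) :
    AccPt (g x) (𝓟 (g '' s)) := by
  have hmap : Tendsto g (𝓝[≠] x) (𝓝[≠] (g x)) :=
    tendsto_nhdsWithin_of_tendsto_nhds_of_eventually_within _ hg.continuousWithinAt (hfib x)
  exact (map_neBot (hf := h)).mono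
    (map_inf_le.trans (inf_le_inf hmap (map_principal (s := s) (f := g)).le))

theorem hasDiscreteFibers_of_conj [TopologicalSpace Y] (e : X ≃ₜ Y) {f : X → X}
    (h : HasDiscreteFibers (e ∘ f ∘ e.symm)) : HasDiscreteFibers f := by
  intro x
  have := h (e x)
  rw [← e.map_punctured_nhds_eq, eventually_map] at this
  simpa [e.injective.ne_iff] using this

theorem eventually_ne_of_injOn_comp [TopologicalSpace Z] {π : Z → X} (hπ : IsOpenMap π)
    {U : Set Z} (hU : IsOpen U) {z : Z} (hz : z ∈ U) (hinj : InjOn (g ∘ π) U) :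
    ∀ᶠ m in 𝓝[≠] (π z), g m ≠ g (π z) := by
  filter_upwards [nhdsWithin_le_nhds (hπ.image_mem_nhds (hU.mem_nhds hz)), self_mem_nhdsWithin]
    with m ⟨t, ht, htm⟩ hne heq
  subst htm
  exact hne (congrArg π (hinj ht hz heq))

end Fibers

section Order

variable {α β : Type*} [LinearOrder β] [TopologicalSpace β] [OrderTopology β] [DenselyOrdered β]

theorem IsOpen.isTop_of_isGreatest {s : Set β} {w : β} (hs : IsOpen s) (hw : IsGreatest s w) :
    IsTop w := by
  intro b
  by_contra! hwb
  obtain ⟨u, hu, hus⟩ := exists_Ico_subset_of_mem_nhds' (hs.mem_nhds hw.1) hwb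
  obtain ⟨c, hwc, hcu⟩ := exists_between hu.1
  exact (hw.2 (hus ⟨hwc.le, hcu⟩)).not_gt hwc

theorem IsOpen.isBot_of_isLeast {s : Set β} {w : β} (hs : IsOpen s) (hw : IsLeast s w) :
    IsBot w :=
  IsOpen.isTop_of_isGreatest (β := βᵒᵈ) hs hw

variable [ConditionallyCompleteLinearOrder α] [DenselyOrdered α] [TopologicalSpace α]
  [OrderTopology α] [PerfectSpace β] {g : α → β} {u v : α}

theorem exists_mem_Ioo_ne_and_isTop_or_isBot (huv : u < v) (hg : ContinuousOn g (Icc u v))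
    (hgo : IsOpen (g '' Ioo u v)) (heq : g u = g v) :
    ∃ c ∈ Ioo u v, g c ≠ g u ∧ (IsTop (g c) ∨ IsBot (g c)) := by
  have hne : (Icc u v).Nonempty := nonempty_Icc.2 huv.le
  obtain ⟨p, hp, hpmax⟩ := isCompact_Icc.exists_isMaxOn hne hg
  obtain ⟨q, hq, hqmin⟩ := isCompact_Icc.exists_isMinOn hne hg
  have mem_Ioo_of_ne : ∀ w ∈ Icc u v, g w ≠ g u → w ∈ Ioo u v := fun w hw hwu =>
    ⟨hw.1.lt_of_ne (by rintro rfl; exact hwu rfl),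
      hw.2.lt_of_ne (by rintro rfl; exact hwu heq.symm)⟩
  by_cases hpu : g p = g u
  · by_cases hqu : g q = g u
    · have hconst : g '' Ioo u v = {g u} := by
        refine (nonempty_Ioo.2 huv).image g |>.subset_singleton_iff.mp ?_
        rintro _ ⟨w, hw, rfl⟩
        exact le_antisymm (hpu ▸ hpmax (Ioo_subset_Icc_self hw))
          (hqu ▸ hqmin (Ioo_subset_Icc_self hw))
      exact absurd (hconst ▸ hgo) (not_isOpen_singleton _)
    · have hqI := mem_Ioo_of_ne q hq hqu
      refine ⟨q, hqI, hqu, Or.inr (hgo.isBot_of_isLeast ⟨mem_image_of_mem g hqI, ?_⟩)⟩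
      rintro _ ⟨w, hw, rfl⟩
      exact hqmin (Ioo_subset_Icc_self hw)
  · have hpI := mem_Ioo_of_ne p hp hpu
    refine ⟨p, hpI, hpu, Or.inl (hgo.isTop_of_isGreatest ⟨mem_image_of_mem g hpI, ?_⟩)⟩
    rintro _ ⟨w, hw, rfl⟩
    exact hpmax (Ioo_subset_Icc_self hw)

theorem injOn_of_isOpen_image [NoTopOrder β] [NoBotOrder β] {s : Set α} (hs : OrdConnected s)
    (hg : ContinuousOn g s) (hgo : ∀ t ⊆ s, IsOpen t → IsOpen (g '' t)) : InjOn g s := by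
  suffices key : ∀ x ∈ s, ∀ y ∈ s, x < y → g x ≠ g y by
    intro x hx y hy hxy
    by_contra hne
    rcases lt_or_gt_of_ne hne with h | h
    exacts [key x hx y hy h hxy, key y hy x hx h hxy.symm]
  intro x hx y hy hxy heq
  have hIcc : Icc x y ⊆ s := hs.out hx hy
  obtain ⟨c, -, -, htop | hbot⟩ := exists_mem_Ioo_ne_and_isTop_or_isBot hxy (hg.mono hIcc)
    (hgo _ (Ioo_subset_Icc_self.trans hIcc) isOpen_Ioo) heq
  exacts [not_isTop _ htop, not_isBot _ hbot]

theorem hasDiscreteFibers_of_isOpenMap (hg : Continuous g) (hgo : IsOpenMap g) :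
    HasDiscreteFibers g := by
  intro z
  by_contra hfib
  rw [not_eventually] at hfib
  simp only [ne_eq, not_not] at hfib
  set E := {y : β | IsTop y ∨ IsBot y} \ {g z}
  have hE : IsClosed E :=
    ((subsingleton_isTop β).finite.union (subsingleton_isBot β).finite).sdiff.isClosed
  -- Between `z` and a nearby point of its fibre lies a point sent to an endpoint other than `g z`.
  have hfreq : ∃ᶠ c in 𝓝 z, g c ∈ E := by
    rw [frequently_iff]
    intro U hU
    obtain ⟨b, c, -, hbc, hbcU⟩ := exists_Icc_mem_subset_of_mem_nhds hU
    have key : ∀ x ∈ Icc b c, ∀ y ∈ Icc b c, x < y → g x = g z → g y = g z →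
        ∃ w ∈ U, g w ∈ E := by
      intro x hx y hy hxy hxz hyz
      obtain ⟨w, hw, hwx, hext⟩ := exists_mem_Ioo_ne_and_isTop_or_isBot hxy hg.continuousOn
        (hgo _ isOpen_Ioo) (hxz.trans hyz.symm)
      exact ⟨w, hbcU (ordConnected_Icc.out hx hy (Ioo_subset_Icc_self hw)), hext, hxz ▸ hwx⟩
    obtain ⟨m, hgm, hmz, hm⟩ := (hfib.and_eventually (inter_mem_nhdsWithin _ hbc)).exists
    rcases lt_or_gt_of_ne hmz with h | h
    exacts [key m hm z (mem_of_mem_nhds hbc) h hgm rfl, key z (mem_of_mem_nhds hbc) m hm h rfl hgm]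
  exact (((hg.tendsto z).frequently hfreq).mem_of_closed hE).2 rfl

end Order

theorem mapsTo_derivedSet {X : Type*} [TopologicalSpace X] {g : X → X} {s : Set X}
    (hg : Continuous g) (hfib : HasDiscreteFibers g) (hs : MapsTo g s s) :
    MapsTo g (derivedSet s) (derivedSet s) := fun _ hx =>
  (hx.map_of_hasDiscreteFibers hg.continuousAt hfib).mono (principal_mono.2 hs.image_subset)

theorem Perfect.not_countable {X : Type*} [TopologicalSpace X] [T2Space X] {M : Set X}
    (hM : Perfect M) (hne : M.Nonempty) (hcpt : IsCompact M) : ¬ M.Countable := by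
  intro hcount
  have : CompactSpace M := isCompact_iff_compactSpace.mp hcpt
  have : Countable M := hcount.to_subtype
  have : Nonempty M := hne.to_subtype
  obtain ⟨x, hx⟩ := nonempty_interior_of_iUnion_of_closed (fun x : M => isClosed_singleton)
    (iUnion_of_singleton M)
  have hopen : IsOpen ({x} : Set M) := hx.subset_singleton_iff.mp interior_subset ▸ isOpen_interior
  obtain ⟨U, hU, hUx⟩ := isOpen_induced_iff.mp hopen
  obtain ⟨y, ⟨hyU, hyM⟩, hyx⟩ := preperfect_iff_nhds.mp hM.2 x x.2 U
    (hU.mem_nhds (show x ∈ Subtype.val ⁻¹' U from hUx ▸ mem_singleton x))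
  exact hyx (congrArg Subtype.val (hUx ▸ hyU : (⟨y, hyM⟩ : M) ∈ ({x} : Set M)))

section IFS

variable {X : Type*} {n : ℕ} {f : Fin n → X → X}

theorem applyWord_mem {D : Set X} (hD : ∀ i, MapsTo (f i) D D) {x : X} (hx : x ∈ D)
    (l : List (Fin n)) : applyWord f l x ∈ D := by
  induction l with
  | nil => exact hx
  | cons i l ih => exact hD i ih

variable [TopologicalSpace X] {M : Set X}

theorem IsMinimalIFS.eq_of_subset (hM : IsMinimalIFS f M) {D : Set X} (hD : IsClosed D)
    (hDf : ∀ i, MapsTo (f i) D D) (hne : D.Nonempty) (hDM : D ⊆ M) : D = M := by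
  obtain ⟨x, hx⟩ := hne
  refine hDM.antisymm ?_
  rw [← hM.2.2.2 x (hDM hx)]
  exact closure_minimal (by rintro _ ⟨l, -, rfl⟩; exact applyWord_mem hDf hx l) hD

theorem IsMinimalIFS.perfect [T1Space X] (hM : IsMinimalIFS f M) (hcont : ∀ i, Continuous (f i))
    (hfib : ∀ i, HasDiscreteFibers (f i)) (hacc : (derivedSet M).Nonempty) : Perfect M := by
  refine perfect_iff_eq_derivedSet.mpr (hM.eq_of_subset (isClosed_derivedSet M) ?_ hacc
    ((isClosed_iff_derivedSet_subset M).mp hM.2.1)).symm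
  exact fun i => mapsTo_derivedSet (hcont i) (hfib i) (mapsTo_iff_image_subset.mpr (hM.2.2.1 i))

end IFS

theorem AddCircle.hasDiscreteFibers_of_isOpenMap {g : S1 → S1} (hg : Continuous g)
    (hgo : IsOpenMap g) : HasDiscreteFibers g := by
  intro z
  obtain ⟨x, rfl⟩ := QuotientAddGroup.mk_surjective z
  obtain ⟨y, hy⟩ := QuotientAddGroup.mk_surjective (g x)
  let φ := AddCircle.openPartialHomeomorphCoe (1 : ℝ) (y - 2⁻¹)
  have hgx : g x ∈ φ.target := hy ▸ φ.map_source (x := y) ⟨by linarith, by linarith⟩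
  obtain ⟨ε, hε, hball⟩ := Metric.mem_nhds_iff.mp <|
    (hg.comp continuous_quotient_mk').continuousAt.preimage_mem_nhds
      (φ.open_target.mem_nhds hgx)
  -- Through the chart of the circle at `g x`, `g` lifts near `x` to an open map `ℝ → ℝ`.
  have hlift : InjOn (φ.symm ∘ g ∘ (↑)) (Metric.ball x ε) := by
    refine injOn_of_isOpen_image (Real.ball_eq_Ioo x ε ▸ ordConnected_Ioo)
      (φ.continuousOn_symm.comp (hg.comp continuous_quotient_mk').continuousOn hball)
      fun t ht htopen => ?_
    rw [image_comp, image_comp]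
    refine φ.symm.isOpen_image_of_subset_source
      (hgo _ (QuotientAddGroup.isOpenMap_coe _ htopen)) ?_
    rintro _ ⟨_, ⟨s, hs, rfl⟩, rfl⟩
    exact hball (ht hs)
  exact eventually_ne_of_injOn_comp QuotientAddGroup.isOpenMap_coe Metric.isOpen_ball
    (Metric.mem_ball_self hε) fun s hs t ht hst => hlift hs ht (congrArg φ.symm hst)

namespace IsCircleOrInterval

variable {X : Type*} [TopologicalSpace X]

theorem compactSpace (hX : IsCircleOrInterval X) : CompactSpace X := by
  rcases hX with ⟨⟨e⟩⟩ | ⟨a, b, -, ⟨e⟩⟩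
  exacts [e.symm.compactSpace, e.symm.compactSpace]

theorem t2Space (hX : IsCircleOrInterval X) : T2Space X := by
  rcases hX with ⟨⟨e⟩⟩ | ⟨a, b, -, ⟨e⟩⟩
  exacts [e.isEmbedding.t2Space, e.isEmbedding.t2Space]

theorem hasDiscreteFibers (hX : IsCircleOrInterval X) {g : X → X} (hg : Continuous g)
    (hgo : IsOpenMap g) : HasDiscreteFibers g := by
  rcases hX with ⟨⟨e⟩⟩ | ⟨a, b, hab, ⟨e⟩⟩
  · exact hasDiscreteFibers_of_conj e <| AddCircle.hasDiscreteFibers_of_isOpenMap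
      (e.continuous.comp (hg.comp e.symm.continuous)) (e.isOpenMap.comp (hgo.comp e.symm.isOpenMap))
  · have : Fact (a ≤ b) := ⟨hab.le⟩
    have : ConnectedSpace (Icc a b) := Subtype.connectedSpace (isConnected_Icc hab.le)
    have : Nontrivial (Icc a b) :=
      ⟨⟨⟨a, left_mem_Icc.2 hab.le⟩, ⟨b, right_mem_Icc.2 hab.le⟩, by simpa using hab.ne⟩⟩
    exact hasDiscreteFibers_of_conj e <| hasDiscreteFibers_of_isOpenMap
      (e.continuous.comp (hg.comp e.symm.continuous)) (e.isOpenMap.comp (hgo.comp e.symm.isOpenMap))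

end IsCircleOrInterval

theorem stmt2 {X : Type*} [TopologicalSpace X] (hX : IsCircleOrInterval X)
    {n : ℕ} (f : Fin n → X → X)
    (hcont : ∀ i, Continuous (f i)) (hopen : ∀ i, IsOpenMap (f i))
    (M : Set X) (hM : IsMinimalIFS f M) (hinf : M.Infinite) :
    ¬ M.Countable := by
  have := hX.compactSpace
  have := hX.t2Space
  have hMc : IsCompact M := hM.2.1.isCompact
  obtain ⟨x, -, hx⟩ := hinf.exists_accPt_of_subset_isCompact hMc Subset.rfl
  have hperf : Perfect M :=
    hM.perfect hcont (fun i => hX.hasDiscreteFibers (hcont i) (hopen i)) ⟨x, hx⟩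
  exact hperf.not_countable hM.1 hMc
end

section
/- Let M ⊆ S¹ be a symmetric Cantorval, with canonical decomposition M = 𝓘 ∪ K ∪ N. Then N = ∅. -/
open Set Topology Filter

/-!
Put `F = M \ interior M`; it has empty interior, so on the circle it is totally disconnected.
It is also perfect. If the component of `z ∈ F` in `M` is nontrivial, `z` lies on its frontier
and is therefore a limit of one-point components, all of which lie in `F`. If the component of
`z` is `{z}`, then `z` is a limit of points `x` of `interior M`, and a connected neighbourhood of
`z` containing `x` must cross the frontier of the component of `x`; that frontier lies in `F`
and, the component being closed, misses `z`. Hence `F` is empty or a Cantor set containing `K`,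
maximality of `K` gives `F = K`, and `N = F \ K = ∅`.
-/

section

variable {X : Type*} [TopologicalSpace X]

theorem interior_diff_interior_self (s : Set X) : interior (s \ interior s) = ∅ := by
  refine eq_empty_of_forall_notMem fun x hx => ?_
  exact (interior_subset hx).2 (interior_mono sdiff_subset hx)

theorem IsClosed.connectedComponentIn {M : Set X} (hM : IsClosed M) (x : X) :
    IsClosed (connectedComponentIn M x) := by
  by_cases hx : x ∈ M
  · refine isClosed_of_closure_subset ?_
    exact isPreconnected_connectedComponentIn.closure.subset_connectedComponentIn
      (subset_closure (mem_connectedComponentIn hx))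
      (closure_minimal (connectedComponentIn_subset M x) hM)
  · rw [connectedComponentIn_eq_empty hx]
    exact isClosed_empty

theorem IsPreconnected.inter_frontier_nonempty {s t : Set X}
    (hs : IsPreconnected s) (hst : (s ∩ t).Nonempty) (hst' : (s \ t).Nonempty) :
    (s ∩ frontier t).Nonempty := by
  by_contra h
  have hcover : s ⊆ interior t ∪ (closure t)ᶜ := fun x hx => by
    have hxf : x ∉ frontier t := fun hf => h ⟨x, hx, hf⟩
    rw [frontier, Set.mem_sdiff, not_and_not_right] at hxf
    by_cases hxt : x ∈ closure t
    · exact Or.inl (hxf hxt)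
    · exact Or.inr hxt
  rcases hs.subset_or_subset isOpen_interior isClosed_closure.isOpen_compl
    (disjoint_compl_right.mono_left interior_subset_closure) hcover with hsub | hsub
  · obtain ⟨x, hxs, hxt⟩ := hst'
    exact hxt (interior_subset (hsub hxs))
  · obtain ⟨x, hxs, hxt⟩ := hst
    exact hsub hxs (subset_closure hxt)

variable [LocallyConnectedSpace X] {M : Set X}

theorem frontier_connectedComponentIn_subset_diff_interior (hM : IsClosed M) (x : X) :
    frontier (connectedComponentIn M x) ⊆ M \ interior M := by
  intro y hy
  have hyC : y ∈ connectedComponentIn M x := (hM.connectedComponentIn x).frontier_subset hy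
  refine ⟨connectedComponentIn_subset M x hyC, fun hyM => hy.2 ?_⟩
  rw [connectedComponentIn_eq hyC, mem_interior_iff_mem_nhds]
  exact connectedComponentIn_mem_nhds (mem_interior_iff_mem_nhds.mp hyM)

theorem notMem_interior_of_connectedComponentIn_eq_singleton [PerfectSpace X] {y : X}
    (hy : connectedComponentIn M y = {y}) : y ∉ interior M := by
  intro hyM
  have := connectedComponentIn_mem_nhds (mem_interior_iff_mem_nhds.mp hyM)
  rw [hy] at this
  exact not_isOpen_singleton y
    ((isOpen_singleton_iff_nhds_eq_pure y).mpr ((le_pure_iff.mpr this).antisymm (pure_le_nhds y)))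

theorem accPt_diff_interior_of_connectedComponentIn_eq_singleton (hM : IsClosed M) {z : X}
    (hz : z ∈ closure (interior M)) (hz' : z ∉ interior M)
    (hcz : connectedComponentIn M z = {z}) : AccPt z (𝓟 (M \ interior M)) := by
  rw [accPt_iff_nhds]
  intro U hU
  obtain ⟨V, hVU, hVo, hzV, hVc⟩ := locallyConnectedSpace_iff_subsets_isOpen_isConnected.mp
    ‹_› z U hU
  obtain ⟨x, hxV, hxM⟩ := mem_closure_iff.mp hz V hVo hzV
  have hzC : z ∉ connectedComponentIn M x := by
    intro h
    have hx : x ∈ connectedComponentIn M z := by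
      rw [← connectedComponentIn_eq h]; exact mem_connectedComponentIn (interior_subset hxM)
    rw [hcz, mem_singleton_iff] at hx
    exact hz' (hx ▸ hxM)
  obtain ⟨y, hyV, hyC⟩ := hVc.isPreconnected.inter_frontier_nonempty
    ⟨x, hxV, mem_connectedComponentIn (interior_subset hxM)⟩ ⟨z, hzV, hzC⟩
  refine ⟨y, ⟨hVU hyV, frontier_connectedComponentIn_subset_diff_interior hM x hyC⟩, ?_⟩
  rintro rfl
  exact hzC ((hM.connectedComponentIn x).frontier_subset hyC)

theorem IsSymmetricCantorval.preperfect_diff_interior [T2Space X] [PerfectSpace X]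
    (hM : IsSymmetricCantorval M) : Preperfect (M \ interior M) := by
  obtain ⟨-, hMc, hMcl, hacc⟩ := hM
  intro z ⟨hzM, hzi⟩
  by_cases hsub : (connectedComponentIn M z).Subsingleton
  · exact accPt_diff_interior_of_connectedComponentIn_eq_singleton hMc.isClosed (hMcl ▸ hzM) hzi
      (hsub.eq_singleton_of_mem (mem_connectedComponentIn hzM))
  · have hzfr : z ∈ frontier (connectedComponentIn M z) :=
      ⟨subset_closure (mem_connectedComponentIn hzM),
        fun h => hzi (interior_mono (connectedComponentIn_subset M z) h)⟩
    refine (hacc z hzM hsub z hzfr).mono (principal_mono.mpr fun y hy => ⟨hy.1, ?_⟩)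
    exact notMem_interior_of_connectedComponentIn_eq_singleton hy.2

end

namespace AddCircle

variable {p : ℝ} [Fact (0 < p)]

instance : Nontrivial (AddCircle p) := by
  refine ⟨⟨((p / 2 : ℝ) : AddCircle p), 0, fun h => ?_⟩⟩
  have hp : 0 < p := Fact.out
  rw [coe_eq_zero_iff_of_mem_Ico ⟨by positivity, by linarith⟩] at h
  linarith

instance : LocallyConnectedSpace (AddCircle p) :=
  (QuotientAddGroup.isQuotientMap_mk _).isCoinducing.locallyConnectedSpace

theorem interior_nonempty_of_isPreconnected {t : Set (AddCircle p)} (ht : IsPreconnected t)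
    (hnt : t.Nontrivial) : (interior t).Nonempty := by
  obtain ⟨a, ha, b, hb, hab⟩ := hnt
  by_cases htu : t = univ
  · rw [htu, interior_univ]
    exact univ_nonempty
  obtain ⟨c, hc⟩ := (ne_univ_iff_exists_notMem t).mp htu
  obtain ⟨c₀, rfl⟩ := QuotientAddGroup.mk_surjective c
  -- cutting the circle at `c` gives a continuous lift of `t` to `ℝ`
  set g : AddCircle p → ℝ := fun x => equivIco p c₀ x
  have hg : ContinuousOn g t := fun x hx =>
    (continuous_subtype_val.continuousAt.comp
      (continuousAt_equivIco p c₀ (ne_of_mem_of_not_mem hx hc))).continuousWithinAt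
  have hcoe : ∀ x, (g x : AddCircle p) = x := fun x => coe_equivIco
  have hgab : g a ≠ g b := fun h => hab (by rw [← hcoe a, h, hcoe b])
  have hIoo : Ioo (min (g a) (g b)) (max (g a) (g b)) ⊆ interior (g '' t) :=
    isOpen_Ioo.subset_interior_iff.mpr (Ioo_subset_Icc_self.trans
      ((ht.image g hg).ordConnected.uIcc_subset (mem_image_of_mem g ha) (mem_image_of_mem g hb)))
  have hlift : ((↑) : ℝ → AddCircle p) '' (g '' t) = t := by
    rw [image_image]
    simp only [hcoe, image_id']
  obtain ⟨r, hr⟩ := nonempty_Ioo.mpr (min_lt_max.mpr hgab)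
  exact ⟨r, hlift ▸ QuotientAddGroup.isOpenMap_coe.image_interior_subset _
    (mem_image_of_mem _ (hIoo hr))⟩

theorem isTotallyDisconnected_of_interior_eq_empty {F : Set (AddCircle p)}
    (hF : interior F = ∅) : IsTotallyDisconnected F := by
  intro t htF ht
  by_contra hnt
  obtain ⟨x, hx⟩ := interior_nonempty_of_isPreconnected ht (not_subsingleton_iff.mp hnt)
  simpa [hF] using interior_mono htF hx

end AddCircle

theorem IsSymmetricCantorval.isCantorSet_diff_interior {p : ℝ} [Fact (0 < p)]
    {M : Set (AddCircle p)} (hM : IsSymmetricCantorval M) (hne : (M \ interior M).Nonempty) :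
    IsCantorSet (M \ interior M) := by
  have hcompact : IsCompact (M \ interior M) := hM.2.1.diff isOpen_interior
  exact ⟨hne, hcompact, ⟨hcompact.isClosed, hM.preperfect_diff_interior⟩,
    AddCircle.isTotallyDisconnected_of_interior_eq_empty (interior_diff_interior_self M)⟩

theorem stmt5 (M I K N : Set S1) (hM : IsSymmetricCantorval M)
    (hd : IsCanonicalDecomp M I K N) : N = ∅ := by
  obtain ⟨rfl, -, hKF, hmax, rfl, -⟩ := hd
  rcases (M \ interior M).eq_empty_or_nonempty with hF | hF
  · exact subset_empty_iff.mp (hF ▸ sdiff_subset_sdiff_right subset_union_left)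
  · rw [← sdiff_sdiff, hmax _ (hM.isCantorSet_diff_interior hF) hKF subset_rfl, sdiff_self]
end

section
/- Let f₁,…,fₙ : X → X be continuous open maps (X the circle S¹ or a closed interval) and let M be a minimal set for IFS(f₁,…,fₙ). If the interior of M is empty, then M is either finite or a Cantor set. -/
open Set Topology Filter

/-!
If `M` is infinite it has an accumulation point. A continuous open map `g` of the circle or of an
interval has discrete fibres: if `g p = g z = c` with `p ≠ z` close together, the image of the
open arc between them is a small nonempty open set whose frontier is contained in `{c}`, which
cannot exist in a one-dimensional space. Hence each `fᵢ` maps accumulation points of `M` to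
accumulation points of `M`, so the accumulation points lying in `M` form a nonempty invariant set;
by minimality it is dense in `M`, and `M` is perfect. Finally, a nontrivial connected subset of
the circle or of an interval contains an open arc, so a set with empty interior is totally
disconnected.
-/

section Frontier

variable {X Y : Type*} [TopologicalSpace X] [TopologicalSpace Y]

theorem IsOpenMap.frontier_image_subset [T2Space Y] {g : X → Y} (hg' : IsOpenMap g)
    (hg : Continuous g) {O : Set X} (hO : IsOpen O) (hc : IsCompact (closure O)) :
    frontier (g '' O) ⊆ g '' frontier O := by
  rw [(hg' O hO).frontier_eq, hO.frontier_eq]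
  rintro y ⟨hy, hyO⟩
  obtain ⟨x, hx, rfl⟩ := closure_minimal (image_mono subset_closure) (hc.image hg).isClosed hy
  exact ⟨x, ⟨hx, fun hxO => hyO (mem_image_of_mem g hxO)⟩, rfl⟩

theorem IsPreconnected.subset_of_frontier_subset_singleton {T W : Set X} {c w : X}
    (hT : IsPreconnected T) (hW : IsOpen W) (hfr : frontier W ⊆ {c}) (hwT : w ∈ T)
    (hwW : w ∈ W) (hcT : c ∈ T → c = w) : T ⊆ W := by
  refine hT.subset_of_closure_inter_subset hW ⟨w, hwT, hwW⟩ ?_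
  rintro x ⟨hxW, hxT⟩
  by_contra hx
  obtain rfl : x = c := hfr ⟨hxW, by rwa [hW.interior_eq]⟩
  exact hx (hcT hxT ▸ hwW)

end Frontier

/-- `closure O` plays the role of an arc from `p` to `z` inside `V`. -/
def HasLocalArcs (X : Type*) [TopologicalSpace X] : Prop :=
  ∀ z : X, ∀ V ∈ 𝓝 z, ∀ᶠ p in 𝓝 z, p ≠ z → ∃ O : Set X, IsOpen O ∧ O.Nonempty ∧
    IsCompact (closure O) ∧ closure O ⊆ V ∧ frontier O ⊆ {p, z}

def NoSmallPointBoundedOpens (Y : Type*) [TopologicalSpace Y] : Prop :=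
  ∀ c : Y, ∃ U ∈ 𝓝 c, ∀ W ⊆ U, IsOpen W → W.Nonempty → ¬ frontier W ⊆ {c}

def DiscreteFibers {X Y : Type*} [TopologicalSpace X] (g : X → Y) : Prop :=
  ∀ z, ¬ AccPt z (𝓟 (g ⁻¹' {g z}))

section Fibers

variable {X Y : Type*} [TopologicalSpace X] [TopologicalSpace Y]

theorem IsOpenMap.discreteFibers [CompactSpace X] [T2Space Y] (hX : HasLocalArcs X)
    (hY : NoSmallPointBoundedOpens Y) {g : X → Y} (hg' : IsOpenMap g) (hg : Continuous g) :
    DiscreteFibers g := by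
  intro z hacc
  obtain ⟨U, hU, hsmall⟩ := hY (g z)
  obtain ⟨p, ⟨hpz, hp⟩, harc⟩ := ((accPt_iff_frequently.1 hacc).and_eventually
    (hX z _ (hg.continuousAt.preimage_mem_nhds hU))).exists
  obtain ⟨O, hO, hne, hc, hsub, hfr⟩ := harc hpz
  refine hsmall (g '' O) (image_subset_iff.2 (subset_closure.trans hsub)) (hg' O hO)
    (hne.image g) ((hg'.frontier_image_subset hg hO hc).trans ?_)
  rintro _ ⟨x, hx, rfl⟩
  rcases hfr hx with rfl | rfl
  exacts [hp, rfl]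

theorem DiscreteFibers.of_conj (e : X ≃ₜ Y) {g : X → X} (h : DiscreteFibers (e ∘ g ∘ e.symm)) :
    DiscreteFibers g := by
  intro z hacc
  refine h (e z) (e.isOpenEmbedding.accPt_comap_iff.1 ?_)
  convert hacc using 1
  rw [comap_principal]
  congr 1
  ext x
  simp

theorem AccPt.map_of_discreteFibers {g : X → Y} (hg : Continuous g) (hfib : DiscreteFibers g)
    {M : Set X} {N : Set Y} (hMN : MapsTo g M N) {x : X} (hx : AccPt x (𝓟 M)) :
    AccPt (g x) (𝓟 N) := by
  by_contra h
  rw [accPt_iff_frequently, not_frequently] at h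
  refine hfib x (accPt_iff_frequently.2 ?_)
  refine ((accPt_iff_frequently.1 hx).and_eventually (hg.continuousAt.eventually h)).mono ?_
  rintro y ⟨⟨hyx, hyM⟩, hy⟩
  exact ⟨hyx, by_contra fun hne => hy ⟨hne, hMN hyM⟩⟩

end Fibers

theorem hasLocalArcs_of_orderTopology {α : Type*} [LinearOrder α] [TopologicalSpace α]
    [OrderTopology α] [DenselyOrdered α] [CompactIccSpace α] : HasLocalArcs α := by
  intro z V hV
  obtain ⟨l, u, hz, hI, hIV⟩ := exists_Icc_mem_subset_of_mem_nhds hV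
  filter_upwards [hI] with p hp hpz
  have hO : IsOpen (uIoo p z) := isOpen_Ioo
  have hcl : closure (uIoo p z) = uIcc p z := closure_Ioo (inf_lt_sup.2 hpz).ne
  refine ⟨uIoo p z, hO, nonempty_Ioo.2 (inf_lt_sup.2 hpz), hcl ▸ isCompact_uIcc,
    hcl ▸ (ordConnected_Icc.uIcc_subset hp hz).trans hIV, ?_⟩
  rw [hO.frontier_eq, hcl, uIcc, uIoo, Icc_sdiff_Ioo_same inf_le_sup]
  rcases le_total p z with h | h <;> simp [h, pair_comm]

theorem noSmallPointBoundedOpens_of_orderTopology {α : Type*} [CompleteLinearOrder α]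
    [TopologicalSpace α] [OrderTopology α] [DenselyOrdered α] [Nontrivial α] :
    NoSmallPointBoundedOpens α := by
  intro c
  refine ⟨({⊥, ⊤} \ {c})ᶜ, (toFinite _).isClosed.isOpen_compl.mem_nhds fun h => h.2 rfl, ?_⟩
  rintro W hWU hW ⟨w, hw⟩ hfr
  suffices ∃ d ∈ W, d ≠ c ∧ (d = ⊥ ∨ d = ⊤) by
    obtain ⟨d, hdW, hdc, hd⟩ := this
    exact hWU hdW ⟨by rcases hd with rfl | rfl <;> simp, hdc⟩
  rcases lt_trichotomy w c with hwc | rfl | hwc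
  · exact ⟨⊥, isPreconnected_Iio.subset_of_frontier_subset_singleton hW hfr hwc hw
      (fun h => (lt_irrefl c h).elim) (bot_le.trans_lt hwc), (bot_le.trans_lt hwc).ne, .inl rfl⟩
  · have hW : univ ⊆ W :=
      isPreconnected_univ.subset_of_frontier_subset_singleton hW hfr trivial hw fun _ => rfl
    by_cases hbot : (⊥ : α) = w
    · exact ⟨⊤, hW trivial, fun h => bot_ne_top (hbot.trans h.symm), .inr rfl⟩
    · exact ⟨⊥, hW trivial, hbot, .inl rfl⟩
  · exact ⟨⊤, isPreconnected_Ioi.subset_of_frontier_subset_singleton hW hfr hwc hw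
      (fun h => (lt_irrefl c h).elim) (hwc.trans_le le_top), (hwc.trans_le le_top).ne', .inr rfl⟩

theorem IsPreconnected.interior_nonempty_of_nontrivial {α : Type*} [LinearOrder α]
    [TopologicalSpace α] [OrderTopology α] [DenselyOrdered α] {t : Set α}
    (ht : IsPreconnected t) (hnt : t.Nontrivial) : (interior t).Nonempty := by
  obtain ⟨x, hx, y, hy, hxy⟩ := hnt
  exact (nonempty_Ioo.2 (inf_lt_sup.2 hxy)).mono <|
    interior_maximal (Ioo_subset_Icc_self.trans (ht.ordConnected.uIcc_subset hx hy)) isOpen_Ioo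

theorem HasLocalArcs.of_isOpenMap {X Y : Type*} [TopologicalSpace X] [TopologicalSpace Y]
    [T2Space Y] (hX : HasLocalArcs X) {π : X → Y} (hπ' : IsOpenMap π) (hπ : Continuous π)
    (hsurj : Function.Surjective π) : HasLocalArcs Y := by
  intro y V hV
  obtain ⟨z, rfl⟩ := hsurj y
  refine hπ'.nhds_le z ((hX z _ (hπ.continuousAt.preimage_mem_nhds hV)).mono fun p harc hpz => ?_)
  obtain ⟨O, hO, hne, hc, hsub, hfr⟩ := harc (ne_of_apply_ne π hpz)
  have hcl : closure (π '' O) ⊆ π '' closure O :=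
    closure_minimal (image_mono subset_closure) (hc.image hπ).isClosed
  refine ⟨π '' O, hπ' O hO, hne.image π, (hc.image hπ).of_isClosed_subset isClosed_closure hcl,
    hcl.trans (image_subset_iff.2 hsub), ?_⟩
  rw [← image_pair]
  exact (hπ'.frontier_image_subset hπ hO hc).trans (image_mono hfr)

theorem S1.hasLocalArcs : HasLocalArcs S1 :=
  hasLocalArcs_of_orderTopology.of_isOpenMap QuotientAddGroup.isOpenMap_coe
    (AddCircle.continuous_mk' 1) QuotientAddGroup.mk_surjective

theorem S1.isConnected_compl_singleton (c : S1) : IsConnected {c}ᶜ := by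
  obtain ⟨c, rfl⟩ := QuotientAddGroup.mk_surjective c
  let ψ := AddCircle.openPartialHomeomorphCoe (1 : ℝ) c
  rw [← AddCircle.openPartialHomeomorphCoe_target, ← ψ.image_source_eq_target]
  exact (isConnected_Ioo (lt_add_one c)).image _ ψ.continuousOn

theorem S1.noSmallPointBoundedOpens : NoSmallPointBoundedOpens S1 := by
  intro c
  obtain ⟨⟨d, hdc⟩, hconn⟩ := S1.isConnected_compl_singleton c
  refine ⟨{d}ᶜ, isOpen_compl_singleton.mem_nhds fun h => hdc h.symm, ?_⟩
  rintro W hWU hW ⟨w, hw⟩ hfr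
  refine hWU ?_ rfl
  by_cases hwc : w = c
  · exact isPreconnected_univ.subset_of_frontier_subset_singleton hW hfr trivial hw
      (fun _ => hwc.symm) trivial
  · exact hconn.subset_of_frontier_subset_singleton hW hfr hwc hw (fun h => (h rfl).elim) hdc

theorem S1.interior_nonempty_of_isPreconnected {t : Set S1} (ht : IsPreconnected t)
    (hnt : t.Nontrivial) : (interior t).Nonempty := by
  by_cases hu : t = univ
  · simp [hu]
  obtain ⟨d, hd⟩ := (ne_univ_iff_exists_notMem t).1 hu
  obtain ⟨d, rfl⟩ := QuotientAddGroup.mk_surjective d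
  let ψ := AddCircle.openPartialHomeomorphCoe (1 : ℝ) d
  have htψ : t ⊆ ψ.target := fun x hx (h : x = _) => hd (h ▸ hx)
  have hint := (ht.image _ (ψ.continuousOn_symm.mono htψ)).interior_nonempty_of_nontrivial
    (hnt.image_of_injOn (ψ.symm.injOn.mono htψ))
  have hsrc : interior (ψ.symm '' t) ⊆ ψ.source :=
    interior_subset.trans (ψ.symm_image_target_eq_source ▸ image_mono htψ)
  refine (hint.image ψ).mono <|
    interior_maximal ?_ (ψ.isOpen_image_of_subset_source isOpen_interior hsrc)
  calc ψ '' interior (ψ.symm '' t) ⊆ ψ '' (ψ.symm '' t) := image_mono interior_subset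
    _ = t := ψ.toPartialEquiv.image_symm_image_of_subset_target htψ

theorem Homeomorph.isTotallyDisconnected_of_interior_eq_empty {X Y : Type*}
    [TopologicalSpace X] [TopologicalSpace Y] (e : X ≃ₜ Y)
    (hY : ∀ t : Set Y, IsPreconnected t → t.Nontrivial → (interior t).Nonempty)
    {s : Set X} (hs : interior s = ∅) : IsTotallyDisconnected s := by
  refine e.isEmbedding.isTotallyDisconnected fun t hts ht => not_nontrivial_iff.1 fun hnt => ?_
  have hint : interior t ⊆ e '' interior s := e.image_interior s ▸ interior_mono hts
  rw [hs, image_empty] at hint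
  exact (hY t ht hnt).ne_empty (subset_empty_iff.1 hint)

namespace IsCircleOrInterval

variable {X : Type*} [TopologicalSpace X]

theorem discreteFibers (hX : IsCircleOrInterval X) {g : X → X} (hg' : IsOpenMap g)
    (hg : Continuous g) : DiscreteFibers g := by
  rcases hX with ⟨⟨e⟩⟩ | ⟨a, b, hab, ⟨e⟩⟩
  · exact .of_conj e <| (e.isOpenMap.comp (hg'.comp e.symm.isOpenMap)).discreteFibers
      S1.hasLocalArcs S1.noSmallPointBoundedOpens (e.continuous.comp (hg.comp e.symm.continuous))
  · have : Fact (a ≤ b) := ⟨hab.le⟩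
    have : Nontrivial (Icc a b) := ⟨⟨⊥, ⊤, fun h => hab.ne (congrArg Subtype.val h)⟩⟩
    exact .of_conj e <| (e.isOpenMap.comp (hg'.comp e.symm.isOpenMap)).discreteFibers
      hasLocalArcs_of_orderTopology noSmallPointBoundedOpens_of_orderTopology
      (e.continuous.comp (hg.comp e.symm.continuous))

theorem isTotallyDisconnected (hX : IsCircleOrInterval X) {s : Set X} (hs : interior s = ∅) :
    IsTotallyDisconnected s := by
  rcases hX with ⟨⟨e⟩⟩ | ⟨a, b, -, ⟨e⟩⟩
  · exact e.isTotallyDisconnected_of_interior_eq_empty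
      (fun _ => S1.interior_nonempty_of_isPreconnected) hs
  · exact e.isTotallyDisconnected_of_interior_eq_empty
      (fun _ => IsPreconnected.interior_nonempty_of_nontrivial) hs

end IsCircleOrInterval

theorem orbitIFS_subset {X : Type*} {n : ℕ} {f : Fin n → X → X} {S : Set X}
    (hS : ∀ i, MapsTo (f i) S S) {x : X} (hx : x ∈ S) : orbitIFS f x ⊆ S := by
  rintro _ ⟨l, -, rfl⟩
  induction l with
  | nil => exact hx
  | cons i l ih => exact hS i ih

theorem IsMinimalIFS.preperfect_of_infinite {X : Type*} [TopologicalSpace X] [CompactSpace X]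
    [T1Space X] {n : ℕ} {f : Fin n → X → X} (hf : ∀ i, Continuous (f i))
    (hfib : ∀ i, DiscreteFibers (f i)) {M : Set X} (hM : IsMinimalIFS f M) (hinf : M.Infinite) :
    Preperfect M := by
  obtain ⟨-, hclosed, hinv, hmin⟩ := hM
  obtain ⟨z, hz⟩ := hinf.exists_accPt_principal
  have hzM : z ∈ M := hclosed.closure_subset (derivedSet_subset_closure M hz)
  have hmaps : ∀ i, MapsTo (f i) (M ∩ derivedSet M) (M ∩ derivedSet M) := fun i x hx =>
    ⟨hinv i (mem_image_of_mem _ hx.1),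
      hx.2.map_of_discreteFibers (hf i) (hfib i) (mapsTo_iff_image_subset.2 (hinv i))⟩
  rw [preperfect_iff_subset_derivedSet]
  calc M = closure (orbitIFS f z) := (hmin z hzM).symm
    _ ⊆ closure (M ∩ derivedSet M) := closure_mono (orbitIFS_subset hmaps ⟨hzM, hz⟩)
    _ ⊆ derivedSet M := closure_minimal inter_subset_right (isClosed_derivedSet M)

theorem stmt8 {X : Type*} [TopologicalSpace X] (hX : IsCircleOrInterval X)
    {n : ℕ} (f : Fin n → X → X)
    (hcont : ∀ i, Continuous (f i)) (hopen : ∀ i, IsOpenMap (f i))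
    (M : Set X) (hM : IsMinimalIFS f M) (hint : interior M = ∅) :
    M.Finite ∨ IsCantorSet M := by
  have := hX.compactSpace
  have := hX.t2Space
  refine M.finite_or_infinite.imp id fun hinf =>
    ⟨hM.1, hM.2.1.isCompact, ⟨hM.2.1, ?_⟩, hX.isTotallyDisconnected hint⟩
  exact hM.preperfect_of_infinite hcont (fun i => hX.discreteFibers (hopen i) (hcont i)) hinf
end

section
/- Let f₁,…,fₙ : S¹ → S¹ be continuous open maps and let M be a minimal set for IFS(f₁,…,fₙ), with canonical decomposition M = 𝓘 ∪ K ∪ N. If the interior of M is nonempty, then one of the following holds: M = S¹; or ∂𝓘 ∩ N ≠ ∅; or K = ∅ (so M = 𝓘 ∪ N); or N = ∅ (so M = 𝓘 ∪ K). -/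
open Set Topology Filter

/-! A minimal set is the closure of the orbit of each of its points, so it is contained in every
closed invariant set meeting it. When the generators are continuous and open, `closure (interior M)`
is such a set, hence `M` is regular closed; then `N ⊆ M \ 𝓘 = ∂𝓘`, so either `N = ∅` or `N` meets
`∂𝓘`. -/

section

variable {X : Type*} {n : ℕ} {f : Fin n → X → X}

theorem applyWord_mem_of_image_subset {S : Set X} (hS : ∀ i, f i '' S ⊆ S) {x : X} (hx : x ∈ S)
    (l : List (Fin n)) : applyWord f l x ∈ S := by
  induction l with
  | nil => exact hx
  | cons i t ih => exact hS i ⟨_, ih, rfl⟩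

theorem orbitIFS_subset_of_image_subset {S : Set X} (hS : ∀ i, f i '' S ⊆ S) {x : X}
    (hx : x ∈ S) : orbitIFS f x ⊆ S := by
  rintro y ⟨l, -, rfl⟩
  exact applyWord_mem_of_image_subset hS hx l

variable [TopologicalSpace X]

theorem IsMinimalIFS.subset_of_isClosed {M C : Set X} (hM : IsMinimalIFS f M) (hC : IsClosed C)
    (hCinv : ∀ i, f i '' C ⊆ C) {x : X} (hxM : x ∈ M) (hxC : x ∈ C) : M ⊆ C := by
  rw [← hM.2.2.2 x hxM]
  exact closure_minimal (orbitIFS_subset_of_image_subset hCinv hxC) hC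

theorem image_interior_subset_interior_of_isOpenMap {M : Set X} (hopen : ∀ i, IsOpenMap (f i))
    (hinv : ∀ i, f i '' M ⊆ M) (i : Fin n) : f i '' interior M ⊆ interior M :=
  interior_maximal ((image_mono interior_subset).trans (hinv i)) (hopen i _ isOpen_interior)

theorem image_closure_subset_closure_of_continuous {S : Set X} (hcont : ∀ i, Continuous (f i))
    (hinv : ∀ i, f i '' S ⊆ S) (i : Fin n) : f i '' closure S ⊆ closure S :=
  (image_closure_subset_closure_image (hcont i)).trans (closure_mono (hinv i))

theorem IsMinimalIFS.closure_interior_eq {M : Set X} (hM : IsMinimalIFS f M)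
    (hcont : ∀ i, Continuous (f i)) (hopen : ∀ i, IsOpenMap (f i))
    (hint : (interior M).Nonempty) : closure (interior M) = M := by
  obtain ⟨x, hx⟩ := hint
  refine (closure_minimal interior_subset hM.2.1).antisymm ?_
  exact hM.subset_of_isClosed isClosed_closure
    (image_closure_subset_closure_of_continuous hcont
      (image_interior_subset_interior_of_isOpenMap hopen hM.2.2.1))
    (interior_subset hx) (subset_closure hx)

theorem IsCanonicalDecomp.subset_frontier {M I K N : Set X} (hd : IsCanonicalDecomp M I K N)
    (hM : closure (interior M) = M) : N ⊆ frontier I := by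
  obtain ⟨rfl, -, -, -, rfl, -⟩ := hd
  rw [isOpen_interior.frontier_eq, hM]
  exact sdiff_subset_sdiff_right subset_union_left

end

theorem stmt9 {n : ℕ} (f : Fin n → S1 → S1)
    (hcont : ∀ i, Continuous (f i)) (hopen : ∀ i, IsOpenMap (f i))
    (M I K N : Set S1) (hM : IsMinimalIFS f M) (hd : IsCanonicalDecomp M I K N)
    (hint : (interior M).Nonempty) :
    M = Set.univ ∨ (frontier I ∩ N).Nonempty ∨ K = ∅ ∨ N = ∅ := by
  have hN : N ⊆ frontier I := hd.subset_frontier (hM.closure_interior_eq hcont hopen hint)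
  rcases N.eq_empty_or_nonempty with hempty | ⟨y, hy⟩
  · exact Or.inr (Or.inr (Or.inr hempty))
  · exact Or.inr (Or.inl ⟨y, hN hy, hy⟩)
end

section
/- Let f : S¹ → S¹ be a continuous open map and A ⊆ S¹ a closed set with f(A) ⊆ A. Then f maps the derived set of A into itself: f(A') ⊆ A', where A' denotes the set of accumulation points of A. -/
open Set Topology Filter

/-
If `f (x)` were not an accumulation point of `A`, then near `x` every point of `A` would be sent
to `f (x)` itself, so `x` would accumulate on the fibre `f⁻¹ {f x}`. This cannot happen for a
continuous open map of the circle: lifting to `ℝ` and reading `f` through a chart, two nearby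
points with the same image give a real function taking equal values at the ends of an interval,
hence an interior extremum (Rolle), and the image of the interval is then not open.
-/

section Topology

variable {X Y : Type*} [TopologicalSpace X] [TopologicalSpace Y]

theorem AccPt.preimage_of_isOpenMap {π : X → Y} (hπ : IsOpenMap π) {x : X} {F : Set Y}
    (h : AccPt (π x) (𝓟 F)) : AccPt x (𝓟 (π ⁻¹' F)) := by
  rw [accPt_iff_frequently] at h ⊢
  have h' : ∃ᶠ s in 𝓝 x, π s ≠ π x ∧ π s ∈ F := frequently_map.1 (h.filter_mono (hπ.nhds_le x))
  exact h'.mono fun s hs => ⟨fun hsx => hs.1 (congrArg π hsx), hs.2⟩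

theorem AccPt.map_of_not_accPt_fiber {f : X → Y} {x : X} {A : Set X} {B : Set Y}
    (hx : AccPt x (𝓟 A)) (hf : ContinuousAt f x) (hfib : ¬ AccPt x (𝓟 (f ⁻¹' {f x})))
    (hAB : MapsTo f A B) : AccPt (f x) (𝓟 B) := by
  rw [accPt_iff_frequently_nhdsNE] at hx hfib ⊢
  have hne : ∀ᶠ y in 𝓝[≠] x, f y ∈ ({f x}ᶜ : Set Y) := not_frequently.1 hfib
  have htendsto : Tendsto f (𝓝[≠] x) (𝓝[≠] (f x)) :=
    tendsto_nhdsWithin_of_tendsto_nhds_of_eventually_within f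
      (hf.tendsto.mono_left nhdsWithin_le_nhds) hne
  exact htendsto.frequently (hx.mono fun _ hy => hAB hy)

end Topology

section Order

variable {α β : Type*}
  [ConditionallyCompleteLinearOrder α] [DenselyOrdered α] [TopologicalSpace α] [OrderTopology α]
  [LinearOrder β] [DenselyOrdered β] [NoMinOrder β] [NoMaxOrder β]
  [TopologicalSpace β] [OrderTopology β]

theorem IsExtrOn.not_isOpen_image {γ : Type*} {g : γ → β} {s U : Set γ} {t : γ}
    (hext : IsExtrOn g s t) (hUs : U ⊆ s) (ht : t ∈ U) : ¬ IsOpen (g '' U) := by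
  intro hU
  have hgt : g t ∈ g '' U := mem_image_of_mem g ht
  rcases hext with hmin | hmax
  · have hsub : g '' U ⊆ Ici (g t) := image_subset_iff.2 fun u hu => hmin (hUs hu)
    have hint : g t ∈ interior (Ici (g t)) := interior_maximal hsub hU hgt
    rw [interior_Ici, mem_Ioi] at hint
    exact hint.false
  · have hsub : g '' U ⊆ Iic (g t) := image_subset_iff.2 fun u hu => hmax (hUs hu)
    have hint : g t ∈ interior (Iic (g t)) := interior_maximal hsub hU hgt
    rw [interior_Iic, mem_Iio] at hint
    exact hint.false

theorem not_isOpen_image_uIoo_of_eq {g : α → β} {a b : α} (hab : a ≠ b)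
    (hg : ContinuousOn g (uIcc a b)) (hgab : g a = g b) : ¬ IsOpen (g '' uIoo a b) := by
  wlog hlt : a < b generalizing a b
  · rw [uIcc_comm] at hg
    rw [uIoo_comm]
    exact this hab.symm hg hgab.symm (hab.lt_or_gt.resolve_left hlt)
  rw [uIcc_of_lt hlt] at hg
  rw [uIoo_of_lt hlt]
  obtain ⟨t, ht, hext⟩ := exists_Ioo_extr_on_Icc hlt hg hgab
  exact hext.not_isOpen_image Ioo_subset_Icc_self ht

theorem not_accPt_fiber_of_isOpenMap [NoMaxOrder α] [NoMinOrder α] {Y : Type*}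
    [TopologicalSpace Y] {h : α → Y} (hc : Continuous h) (ho : IsOpenMap h)
    (e : OpenPartialHomeomorph Y β) {x : α} (hx : h x ∈ e.source) :
    ¬ AccPt x (𝓟 (h ⁻¹' {h x})) := by
  intro hacc
  have hO : h ⁻¹' e.source ∈ 𝓝 x := hc.continuousAt.preimage_mem_nhds (e.open_source.mem_nhds hx)
  obtain ⟨l, u, hxlu, hluO⟩ := mem_nhds_iff_exists_Ioo_subset.1 hO
  obtain ⟨y, ⟨hylu, hyx_fib⟩, hyx⟩ := accPt_iff_nhds.1 hacc _ (Ioo_mem_nhds hxlu.1 hxlu.2)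
  have hsub : uIcc x y ⊆ h ⁻¹' e.source := (ordConnected_Ioo.uIcc_subset hxlu hylu).trans hluO
  refine not_isOpen_image_uIoo_of_eq (g := e ∘ h) hyx.symm
    (e.continuousOn.comp hc.continuousOn hsub) (by simp [hyx_fib.symm]) ?_
  rw [image_comp]
  exact e.isOpen_image_of_subset_source (ho _ isOpen_Ioo)
    (image_subset_iff.2 (uIoo_subset_uIcc_self.trans hsub))

end Order

theorem AddCircle.not_accPt_fiber_of_isOpenMap {p q : ℝ} {f : AddCircle p → AddCircle q}
    (hc : Continuous f) (ho : IsOpenMap f) (x : AddCircle p) :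
    ¬ AccPt x (𝓟 (f ⁻¹' {f x})) := by
  obtain ⟨s, rfl⟩ := QuotientAddGroup.mk_surjective x
  obtain ⟨t, ht⟩ := QuotientAddGroup.mk_surjective (f s)
  have hs : (f ∘ (↑)) s ∈ ((isLocalHomeomorph_coe q).localInverseAt t).source := by
    rw [Function.comp_apply, ← ht]
    exact (isLocalHomeomorph_coe q).apply_self_mem_localInverseAt_source
  intro hacc
  exact _root_.not_accPt_fiber_of_isOpenMap (hc.comp (AddCircle.continuous_mk' p))
    (ho.comp QuotientAddGroup.isOpenMap_coe) _ hs
    (hacc.preimage_of_isOpenMap QuotientAddGroup.isOpenMap_coe)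

theorem stmt11_general (f : S1 → S1) (hcont : Continuous f) (hopen : IsOpenMap f)
    (A : Set S1) (hinv : f '' A ⊆ A) :
    f '' {x : S1 | AccPt x (𝓟 A)} ⊆ {x : S1 | AccPt x (𝓟 A)} := by
  rintro _ ⟨x, hx, rfl⟩
  exact AccPt.map_of_not_accPt_fiber hx hcont.continuousAt
    (AddCircle.not_accPt_fiber_of_isOpenMap hcont hopen x) (mapsTo_iff_image_subset.2 hinv)

theorem stmt11 (f : S1 → S1) (hcont : Continuous f) (hopen : IsOpenMap f)
    (A : Set S1) (hA : IsClosed A) (hinv : f '' A ⊆ A) :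
    f '' {x : S1 | AccPt x (𝓟 A)} ⊆ {x : S1 | AccPt x (𝓟 A)} :=
  stmt11_general f hcont hopen A hinv
end

section
/- Let K₁ ⊆ [a,b] and K₂ ⊆ [c,d] be Cantor sets with a,b ∈ K₁ and c,d ∈ K₂. Suppose the connected components of [a,b] \ K₁ are exactly the members of two disjoint sequences {I_i}_{i∈ℕ} and {I'_i}_{i∈ℕ} (I_i ∩ I'_k = ∅ for all i,k, and every component is one of them), with the set of endpoints of the I_i dense in K₁ and the set of endpoints of the I'_i dense in K₁; and suppose analogously the connected components of [c,d] \ K₂ are the members of two disjoint sequences {J_j}_{j∈ℕ} and {J'_j}_{j∈ℕ}, each with endpoint set dense in K₂. Then there exists an increasing homeomorphism ψ : [a,b] → [c,d] such that ψ(K₁) = K₂ and ψ(⋃_i I_i) = ⋃_j J_j. -/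
/-!
The gaps of `K₁` (the components of `[a, b] \ K₁`), ordered from left to right, form a countable
linear order. Since `K₁` is perfect and every point of it is a limit of endpoints of the `I i` and
of the `I' i`, both the `I`-gaps and the remaining gaps are dense in that order and unbounded in
either direction; the same holds for `K₂`. A back-and-forth argument therefore gives an order
isomorphism between the gaps of `K₁` and those of `K₂` that sends the `I`-gaps exactly onto the
`J`-gaps. Mapping each gap affinely onto its image gives a strictly increasing bijection
`[a, b] \ K₁ → [c, d] \ K₂` between sets that are dense, as Cantor sets have empty interior; its
extension by suprema is an increasing bijection `[a, b] → [c, d]`, hence a homeomorphism, and it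
carries `K₁` onto `K₂`.
-/

open Set Topology Filter

-- The proof of `Order.iso_of_countable_dense`, with the colours carried along.
section BackAndForth

variable {α β κ : Type*} [LinearOrder α] [LinearOrder β]

structure IsDenseColoring (c : α → κ) : Prop where
  exists_between : ∀ k {x y : α}, x < y → ∃ m, c m = k ∧ x < m ∧ m < y
  exists_lt : ∀ k (x : α), ∃ m, c m = k ∧ m < x
  exists_gt : ∀ k (x : α), ∃ m, c m = k ∧ x < m

theorem IsDenseColoring.exists_between_finsets [Nonempty α] {c : α → κ} (hc : IsDenseColoring c)
    (k : κ) (lo hi : Finset α) (hlo : ∀ x ∈ lo, ∀ y ∈ hi, x < y) :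
    ∃ m, c m = k ∧ (∀ x ∈ lo, x < m) ∧ ∀ y ∈ hi, m < y := by
  rcases lo.eq_empty_or_nonempty with rfl | hlo_ne <;>
    rcases hi.eq_empty_or_nonempty with rfl | hhi_ne
  · obtain ⟨m, hm, -⟩ := hc.exists_lt k (Classical.arbitrary α)
    exact ⟨m, hm, by simp, by simp⟩
  · obtain ⟨m, hm, hmy⟩ := hc.exists_lt k (hi.min' hhi_ne)
    exact ⟨m, hm, by simp, fun y hy => hmy.trans_le (hi.min'_le y hy)⟩
  · obtain ⟨m, hm, hxm⟩ := hc.exists_gt k (lo.max' hlo_ne)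
    exact ⟨m, hm, fun x hx => (lo.le_max' x hx).trans_lt hxm, by simp⟩
  · obtain ⟨m, hm, hxm, hmy⟩ :=
      hc.exists_between k (hlo _ (lo.max'_mem hlo_ne) _ (hi.min'_mem hhi_ne))
    exact ⟨m, hm, fun x hx => (lo.le_max' x hx).trans_lt hxm,
      fun y hy => hmy.trans_le (hi.min'_le y hy)⟩

variable (cα : α → κ) (cβ : β → κ)

def ColoredPartialIso : Type _ :=
  { f : Finset (α × β) //
    (∀ p ∈ f, ∀ q ∈ f, cmp p.1 q.1 = cmp p.2 q.2) ∧ ∀ p ∈ f, cβ p.2 = cα p.1 }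

namespace ColoredPartialIso

instance : Preorder (ColoredPartialIso cα cβ) := Subtype.preorder _

instance : Inhabited (ColoredPartialIso cα cβ) := ⟨⟨∅, by simp, by simp⟩⟩

variable {cα cβ}

theorem exists_across [Nonempty β] (hβ : IsDenseColoring cβ) (f : ColoredPartialIso cα cβ)
    (a : α) : ∃ b, cβ b = cα a ∧ ∀ p ∈ f.val, cmp p.1 a = cmp p.2 b := by
  by_cases h : ∃ b, (a, b) ∈ f.val
  · obtain ⟨b, hb⟩ := h
    exact ⟨b, f.prop.2 _ hb, fun p hp => f.prop.1 _ hp _ hb⟩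
  have hsep : ∀ x ∈ {p ∈ f.val | p.1 < a}.image Prod.snd,
      ∀ y ∈ {p ∈ f.val | a < p.1}.image Prod.snd, x < y := by
    simp only [Finset.mem_image, Finset.mem_filter]
    rintro _ ⟨p, ⟨hp, hpa⟩, rfl⟩ _ ⟨q, ⟨hq, haq⟩, rfl⟩
    exact (lt_iff_lt_of_cmp_eq_cmp (f.prop.1 _ hp _ hq)).mp (hpa.trans haq)
  obtain ⟨b, hb, hlo, hhi⟩ := hβ.exists_between_finsets (cα a) _ _ hsep
  refine ⟨b, hb, fun ⟨p₁, p₂⟩ hp => ?_⟩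
  have hne : p₁ ≠ a := fun he => h ⟨p₂, he ▸ hp⟩
  rcases hne.lt_or_gt with hlt | hgt
  · have h₂ : p₂ < b := hlo _ (Finset.mem_image.mpr ⟨_, Finset.mem_filter.mpr ⟨hp, hlt⟩, rfl⟩)
    rw [(cmp_eq_lt_iff _ _).mpr hlt, (cmp_eq_lt_iff _ _).mpr h₂]
  · have h₂ : b < p₂ := hhi _ (Finset.mem_image.mpr ⟨_, Finset.mem_filter.mpr ⟨hp, hgt⟩, rfl⟩)
    rw [(cmp_eq_gt_iff _ _).mpr hgt, (cmp_eq_gt_iff _ _).mpr h₂]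

protected def comm (f : ColoredPartialIso cα cβ) : ColoredPartialIso cβ cα :=
  ⟨f.val.image (Equiv.prodComm _ _),
    by
      simp only [Finset.mem_image, Equiv.prodComm_apply]
      rintro _ ⟨p, hp, rfl⟩ _ ⟨q, hq, rfl⟩
      exact (f.prop.1 p hp q hq).symm,
    by
      simp only [Finset.mem_image, Equiv.prodComm_apply]
      rintro _ ⟨p, hp, rfl⟩
      exact (f.prop.2 p hp).symm⟩

theorem mem_comm {f : ColoredPartialIso cα cβ} {a : α} {b : β} :
    (b, a) ∈ f.comm.val ↔ (a, b) ∈ f.val := by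
  simp [ColoredPartialIso.comm]

def definedAtLeft [Nonempty β] (hβ : IsDenseColoring cβ) (a : α) :
    Order.Cofinal (ColoredPartialIso cα cβ) where
  carrier := {f | ∃ b, (a, b) ∈ f.val}
  isCofinal f := by
    obtain ⟨b, hb, hcmp⟩ := exists_across hβ f a
    refine ⟨⟨insert (a, b) f.val, ?_, ?_⟩, ⟨b, Finset.mem_insert_self _ _⟩,
      Finset.subset_insert _ _⟩
    · simp only [Finset.mem_insert]
      rintro p (rfl | hp) q (rfl | hq)
      · simp
      · rw [cmp_eq_cmp_symm]; exact hcmp q hq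
      · exact hcmp p hp
      · exact f.prop.1 p hp q hq
    · simp only [Finset.mem_insert]
      rintro p (rfl | hp)
      · exact hb
      · exact f.prop.2 p hp

def definedAtRight [Nonempty α] (hα : IsDenseColoring cα) (b : β) :
    Order.Cofinal (ColoredPartialIso cα cβ) where
  carrier := {f | ∃ a, (a, b) ∈ f.val}
  isCofinal f := by
    obtain ⟨f', ⟨a, ha⟩, hff'⟩ := (definedAtLeft hα b).isCofinal f.comm
    exact ⟨f'.comm, ⟨a, mem_comm.mpr ha⟩, fun p hp => mem_comm.mpr (hff' (mem_comm.mpr hp))⟩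

end ColoredPartialIso

open ColoredPartialIso in
theorem exists_orderIso_of_isDenseColoring [Countable α] [Countable β] [Nonempty α] [Nonempty β]
    {cα : α → κ} {cβ : β → κ} (hα : IsDenseColoring cα) (hβ : IsDenseColoring cβ) :
    ∃ e : α ≃o β, ∀ x, cβ (e x) = cα x := by
  cases nonempty_encodable α
  cases nonempty_encodable β
  let cofinals : α ⊕ β → Order.Cofinal (ColoredPartialIso cα cβ) :=
    Sum.elim (definedAtLeft hβ) (definedAtRight hα)
  let ideal := Order.idealOfCofinals default cofinals
  choose f hfa hf using fun a => Order.cofinal_meets_idealOfCofinals default cofinals (.inl a)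
  choose g hgb hg using fun b => Order.cofinal_meets_idealOfCofinals default cofinals (.inr b)
  choose F hF using hfa
  choose G hG using hgb
  refine ⟨OrderIso.ofCmpEqCmp F G fun a b => ?_, fun a => (f a).prop.2 _ (hF a)⟩
  obtain ⟨m, -, hfm, hgm⟩ := ideal.directed _ (hf a) _ (hg b)
  exact m.prop.1 _ (hfm (hF a)) _ (hgm (hG b))

end BackAndForth

theorem Set.InjOn.image_eq_of_image_sdiff {α β : Type*} {f : α → β} {s t : Set α}
    {s' t' : Set β} (hf : InjOn f s) (ht : t ⊆ s) (ht' : t' ⊆ s') (hs : f '' s = s')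
    (hst : f '' (s \ t) = s' \ t') : f '' t = t' := by
  rw [← sdiff_sdiff_cancel_left ht, hf.image_sdiff_subset sdiff_subset, hs, hst,
    sdiff_sdiff_cancel_left ht']

theorem StrictMonoOn.continuousOn_Icc_of_image_eq {ψ : ℝ → ℝ} {a b c d : ℝ}
    (hψ : StrictMonoOn ψ (Icc a b)) (himg : ψ '' Icc a b = Icc c d) :
    ContinuousOn ψ (Icc a b) := by
  let e : Icc a b ≃o Icc c d := (hψ.orderIso ψ _).trans (OrderIso.setCongr _ _ himg)
  exact continuousOn_iff_continuous_domRestrict.mpr (continuous_subtype_val.comp e.continuous)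

noncomputable def supExtension (f : ℝ → ℝ) (s : Set ℝ) (c x : ℝ) : ℝ :=
  sSup (insert c (f '' (s ∩ Iic x)))

section SupExtension

variable {a b c d : ℝ} {s : Set ℝ} {f : ℝ → ℝ}

private theorem insert_image_subset_Iic (hcd : c ≤ d) (hfs : f '' s ⊆ Icc c d) (x : ℝ) :
    insert c (f '' (s ∩ Iic x)) ⊆ Iic d :=
  insert_subset hcd fun _ ⟨p, hp, hpy⟩ => hpy ▸ (hfs ⟨p, hp.1, rfl⟩).2

theorem supExtension_mem_Icc (hcd : c ≤ d) (hfs : f '' s ⊆ Icc c d) (x : ℝ) :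
    supExtension f s c x ∈ Icc c d :=
  ⟨le_csSup ⟨d, insert_image_subset_Iic hcd hfs x⟩ (mem_insert _ _),
    csSup_le (insert_nonempty _ _) (insert_image_subset_Iic hcd hfs x)⟩

theorem monotone_supExtension (hcd : c ≤ d) (hfs : f '' s ⊆ Icc c d) :
    Monotone (supExtension f s c) := fun _ y hxy =>
  csSup_le_csSup ⟨d, insert_image_subset_Iic hcd hfs y⟩ (insert_nonempty _ _)
    (insert_subset_insert (image_mono (inter_subset_inter_right _ (Iic_subset_Iic.mpr hxy))))

theorem eqOn_supExtension (hf : MonotoneOn f s) (hfs : f '' s ⊆ Icc c d) :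
    EqOn (supExtension f s c) f s := by
  intro x hx
  refine IsGreatest.csSup_eq ⟨mem_insert_of_mem _ ⟨x, ⟨hx, self_mem_Iic⟩, rfl⟩, ?_⟩
  refine forall_mem_insert.mpr ⟨(hfs ⟨x, hx, rfl⟩).1, ?_⟩
  rintro _ ⟨p, ⟨hp, hpx⟩, rfl⟩
  exact hf hp hx hpx

theorem strictMonoOn_supExtension (hcd : c ≤ d) (hs : s ⊆ Icc a b) (hf : StrictMonoOn f s)
    (hfs : f '' s ⊆ Icc c d)
    (hs_dense : ∀ x ∈ Icc a b, ∀ y ∈ Icc a b, x < y → (s ∩ Ioo x y).Nonempty) :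
    StrictMonoOn (supExtension f s c) (Icc a b) := by
  intro x hx y hy hxy
  obtain ⟨p, hps, hp⟩ := hs_dense x hx y hy hxy
  obtain ⟨q, hqs, hq⟩ := hs_dense p (hs hps) y hy hp.2
  have hmono := monotone_supExtension hcd hfs
  have heq := eqOn_supExtension hf.monotoneOn hfs
  calc supExtension f s c x ≤ supExtension f s c p := hmono hp.1.le
    _ = f p := heq hps
    _ < f q := hf hps hqs hq.1
    _ = supExtension f s c q := (heq hqs).symm
    _ ≤ supExtension f s c y := hmono hq.2.le

theorem image_supExtension_Icc (hab : a ≤ b) (hcd : c ≤ d) (hs : s ⊆ Icc a b)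
    (hf : StrictMonoOn f s) (hfs : f '' s ⊆ Icc c d)
    (hfs_dense : ∀ x ∈ Icc c d, ∀ y ∈ Icc c d, x < y → (f '' s ∩ Ioo x y).Nonempty) :
    supExtension f s c '' Icc a b = Icc c d := by
  have hmono := monotone_supExtension hcd hfs
  have heq := eqOn_supExtension hf.monotoneOn hfs
  have hmaps : MapsTo (supExtension f s c) (Icc a b) (Icc c d) := fun x _ =>
    supExtension_mem_Icc hcd hfs x
  refine hmaps.image_subset.antisymm fun y hy => ?_
  set T := insert a {p ∈ s | f p ≤ y}
  have hTbdd : BddAbove T := ⟨b, forall_mem_insert.mpr ⟨hab, fun p hp => (hs hp.1).2⟩⟩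
  have hTab : sSup T ∈ Icc a b :=
    ⟨le_csSup hTbdd (mem_insert _ _),
      csSup_le (insert_nonempty _ _) (forall_mem_insert.mpr ⟨hab, fun p hp => (hs hp.1).2⟩)⟩
  refine ⟨sSup T, hTab, le_antisymm (le_of_not_gt fun hlt => ?_) (le_of_not_gt fun hlt => ?_)⟩
  · obtain ⟨_, ⟨p, hps, rfl⟩, hp⟩ :=
      hfs_dense y hy _ (supExtension_mem_Icc hcd hfs _) hlt
    have hpx : p < sSup T := lt_of_not_ge fun hxp => (hmono hxp).not_gt (heq hps ▸ hp.2)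
    obtain ⟨t, ht, hpt⟩ := exists_lt_of_lt_csSup (insert_nonempty _ _) hpx
    rcases ht with rfl | ⟨hts, hty⟩
    · exact hpt.not_ge (hs hps).1
    · exact (hf hps hts hpt).not_ge (hty.trans hp.1.le)
  · obtain ⟨_, ⟨p, hps, rfl⟩, hp⟩ :=
      hfs_dense _ (supExtension_mem_Icc hcd hfs _) y hy hlt
    exact (hmono (le_csSup hTbdd (mem_insert_of_mem _ ⟨hps, hp.2.le⟩))).not_gt (heq hps ▸ hp.1)

end SupExtension

theorem exists_mem_Ioo_notMem_of_isTotallyDisconnected {K : Set ℝ}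
    (hK : IsTotallyDisconnected K) {x y : ℝ} (hxy : x < y) : ∃ z ∈ Ioo x y, z ∉ K := by
  by_contra! h
  obtain ⟨u, hxu, huy⟩ := exists_between hxy
  obtain ⟨v, huv, hvy⟩ := exists_between huy
  exact huv.ne (hK _ h isPreconnected_Ioo ⟨hxu, huv.trans hvy⟩ ⟨hxu.trans huv, hvy⟩)

theorem Icc_diff_inter_Ioo_nonempty {K : Set ℝ} (hK : IsTotallyDisconnected K) {a b x y : ℝ}
    (hx : x ∈ Icc a b) (hy : y ∈ Icc a b) (hxy : x < y) : ((Icc a b \ K) ∩ Ioo x y).Nonempty := by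
  obtain ⟨z, hz, hzK⟩ := exists_mem_Ioo_notMem_of_isTotallyDisconnected hK hxy
  exact ⟨z, ⟨⟨hx.1.trans hz.1.le, hz.2.le.trans hy.2⟩, hzK⟩, hz⟩

@[ext]
structure Gap (K : Set ℝ) where
  left : ℝ
  right : ℝ
  left_lt_right : left < right
  left_mem : left ∈ K
  right_mem : right ∈ K
  disjoint : Disjoint (Ioo left right) K

namespace Gap

variable {K : Set ℝ} {a b : ℝ} {S : Set (Gap K)}

theorem notMem_of_mem_Ioo (g : Gap K) {x : ℝ} (hx : x ∈ Ioo g.left g.right) : x ∉ K :=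
  g.disjoint.notMem_of_mem_left hx

theorem left_injective : Function.Injective (Gap.left : Gap K → ℝ) := by
  intro g h hgh
  ext
  · exact hgh
  by_contra hne
  rcases lt_or_gt_of_ne hne with hlt | hlt
  · exact h.notMem_of_mem_Ioo ⟨hgh ▸ g.left_lt_right, hlt⟩ g.right_mem
  · exact g.notMem_of_mem_Ioo ⟨hgh.symm ▸ h.left_lt_right, hlt⟩ h.right_mem

noncomputable instance : LinearOrder (Gap K) := LinearOrder.lift' Gap.left left_injective

theorem lt_iff_left_lt {g h : Gap K} : g < h ↔ g.left < h.left := Iff.rfl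

theorem lt_iff_right_le_left {g h : Gap K} : g < h ↔ g.right ≤ h.left := by
  refine ⟨fun hgh => ?_, fun hgh => lt_iff_left_lt.mpr (g.left_lt_right.trans_le hgh)⟩
  by_contra! hlt
  exact g.notMem_of_mem_Ioo ⟨lt_iff_left_lt.mp hgh, hlt⟩ h.left_mem

theorem lt_of_right_lt_right {g h : Gap K} (hgh : g.right < h.right) : g < h := by
  by_contra! hhg
  rcases hhg.lt_or_eq with hlt | rfl
  · exact (g.left_lt_right.trans hgh).not_ge (lt_iff_right_le_left.mp hlt)
  · exact lt_irrefl _ hgh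

theorem eq_of_mem_Ioo {g h : Gap K} {x : ℝ} (hg : x ∈ Ioo g.left g.right)
    (hh : x ∈ Ioo h.left h.right) : g = h := by
  rcases lt_trichotomy g h with hlt | heq | hlt
  · exact absurd (lt_iff_right_le_left.mp hlt) (hh.1.trans hg.2).not_ge
  · exact heq
  · exact absurd (lt_iff_right_le_left.mp hlt) (hg.1.trans hh.2).not_ge

instance : Countable (Gap K) := by
  choose q hq using fun g : Gap K => exists_rat_btwn g.left_lt_right
  have hinj : Function.Injective q := fun g h hgh =>
    eq_of_mem_Ioo (x := q g) (hq g) (hgh ▸ hq h)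
  exact hinj.countable

theorem Ioo_subset_Icc_diff (hK : K ⊆ Icc a b) (g : Gap K) :
    Ioo g.left g.right ⊆ Icc a b \ K := fun _ hx =>
  ⟨Ioo_subset_Icc_self.trans (Icc_subset_Icc (hK g.left_mem).1 (hK g.right_mem).2) hx,
    g.notMem_of_mem_Ioo hx⟩

theorem connectedComponentIn_eq (hK : K ⊆ Icc a b) (g : Gap K) {x : ℝ}
    (hx : x ∈ Ioo g.left g.right) :
    connectedComponentIn (Icc a b \ K) x = Ioo g.left g.right := by
  refine Subset.antisymm (fun y hy => ?_)
    (isPreconnected_Ioo.subset_connectedComponentIn hx (Ioo_subset_Icc_diff hK g))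
  have hx' : x ∈ connectedComponentIn (Icc a b \ K) x :=
    mem_connectedComponentIn (Ioo_subset_Icc_diff hK g hx)
  have hconn := (isPreconnected_connectedComponentIn (F := Icc a b \ K) (x := x)).ordConnected
  have hnot : ∀ z ∈ K, z ∉ connectedComponentIn (Icc a b \ K) x := fun z hz hzC =>
    (connectedComponentIn_subset _ _ hzC).2 hz
  refine ⟨lt_of_not_ge fun hyl => hnot _ g.left_mem ?_,
    lt_of_not_ge fun hyr => hnot _ g.right_mem ?_⟩
  · exact hconn.out hy hx' ⟨hyl, hx.1.le⟩
  · exact hconn.out hx' hy ⟨hx.2.le, hyr⟩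

theorem exists_mem_Ioo (hKc : IsClosed K) (ha : a ∈ K) (hb : b ∈ K) {x : ℝ}
    (hx : x ∈ Icc a b \ K) : ∃ g : Gap K, x ∈ Ioo g.left g.right := by
  have hbelow : (K ∩ Iic x).Nonempty := ⟨a, ha, hx.1.1⟩
  have habove : (K ∩ Ici x).Nonempty := ⟨b, hb, hx.1.2⟩
  have hbdd : BddAbove (K ∩ Iic x) := ⟨x, fun _ hy => hy.2⟩
  have hbdd' : BddBelow (K ∩ Ici x) := ⟨x, fun _ hy => hy.2⟩
  obtain ⟨hlK, hlx⟩ := (hKc.inter isClosed_Iic).csSup_mem hbelow hbdd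
  obtain ⟨hrK, hxr⟩ := (hKc.inter isClosed_Ici).csInf_mem habove hbdd'
  have hlx' : sSup (K ∩ Iic x) < x := lt_of_le_of_ne hlx fun h => hx.2 (h ▸ hlK)
  have hxr' : x < sInf (K ∩ Ici x) := lt_of_le_of_ne hxr fun h => hx.2 (h ▸ hrK)
  refine ⟨⟨_, _, hlx'.trans hxr', hlK, hrK, Set.disjoint_left.mpr fun y hy hyK => ?_⟩, hlx', hxr'⟩
  rcases le_total y x with hyx | hxy
  · exact hy.1.not_ge (le_csSup hbdd ⟨hyK, hyx⟩)
  · exact hy.2.not_ge (csInf_le hbdd' ⟨hyK, hxy⟩)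

theorem iUnion_Ioo (hKc : IsClosed K) (hK : K ⊆ Icc a b) (ha : a ∈ K) (hb : b ∈ K) :
    ⋃ g : Gap K, Ioo g.left g.right = Icc a b \ K :=
  Subset.antisymm (iUnion_subset (Ioo_subset_Icc_diff hK)) fun _ hx =>
    mem_iUnion.mpr (exists_mem_Ioo hKc ha hb hx)

theorem exists_eq_Ioo (hKc : IsClosed K) (hKab : K ⊆ Icc a b) (ha : a ∈ K) (hb : b ∈ K)
    {s : Set ℝ} (hs : ∃ x ∈ Icc a b \ K, s = connectedComponentIn (Icc a b \ K) x) :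
    ∃ g : Gap K, s = Ioo g.left g.right := by
  obtain ⟨x, hx, rfl⟩ := hs
  obtain ⟨g, hg⟩ := exists_mem_Ioo hKc ha hb hx
  exact ⟨g, connectedComponentIn_eq hKab g hg⟩

theorem iUnion_eq_biUnion {I : ℕ → Set ℝ} (hI : ∀ i, ∃ g : Gap K, I i = Ioo g.left g.right) :
    ⋃ i, I i = ⋃ (g : Gap K) (_ : ∃ i, Ioo g.left g.right = I i), Ioo g.left g.right := by
  ext x
  simp only [mem_iUnion]
  constructor
  · rintro ⟨i, hx⟩
    obtain ⟨g, hg⟩ := hI i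
    exact ⟨g, ⟨i, hg.symm⟩, hg ▸ hx⟩
  · rintro ⟨g, ⟨i, hi⟩, hx⟩
    exact ⟨i, hi ▸ hx⟩

theorem nonempty (hK : Perfect K) (hK' : IsTotallyDisconnected K) (hKab : K ⊆ Icc a b)
    (ha : a ∈ K) (hb : b ∈ K) : Nonempty (Gap K) := by
  obtain ⟨y, ⟨-, hyK⟩, hya⟩ := accPt_iff_nhds.mp (hK.acc a ha) univ Filter.univ_mem
  obtain ⟨z, hz, hzK⟩ :=
    exists_mem_Ioo_notMem_of_isTotallyDisconnected hK' ((hKab hyK).1.lt_of_ne' hya)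
  obtain ⟨g, -⟩ := exists_mem_Ioo hK.closed ha hb ⟨⟨hz.1.le, hz.2.le.trans (hKab hyK).2⟩, hzK⟩
  exact ⟨g⟩

def endpoints (S : Set (Gap K)) : Set ℝ := ⋃ g ∈ S, {g.left, g.right}

theorem exists_mem_of_mem_endpoints {x : ℝ} (hx : x ∈ endpoints S) :
    ∃ g ∈ S, x ∈ Icc g.left g.right := by
  simp only [endpoints, mem_iUnion, mem_insert_iff, mem_singleton_iff] at hx
  obtain ⟨g, hg, rfl | rfl⟩ := hx
  exacts [⟨g, hg, le_rfl, g.left_lt_right.le⟩, ⟨g, hg, g.left_lt_right.le, le_rfl⟩]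

theorem exists_mem_Ioo_right (hK : Perfect K) (g : Gap K) {v : ℝ} (hv : g.right < v) :
    ∃ w ∈ K, w ∈ Ioo g.right v := by
  obtain ⟨w, ⟨hw, hwK⟩, hwr⟩ := accPt_iff_nhds.mp (hK.acc _ g.right_mem) (Ioo g.left v)
    (isOpen_Ioo.mem_nhds ⟨g.left_lt_right, hv⟩)
  refine ⟨w, hwK, lt_of_le_of_ne ?_ hwr.symm, hw.2⟩
  exact le_of_not_gt fun hlt => g.notMem_of_mem_Ioo ⟨hw.1, hlt⟩ hwK

theorem exists_mem_between (hK : Perfect K) (hS : K ⊆ closure (endpoints S)) {g h : Gap K}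
    (hgh : g < h) : ∃ m ∈ S, g < m ∧ m < h := by
  have hlt : g.right < h.left := by
    refine (lt_iff_right_le_left.mp hgh).lt_of_ne fun heq => ?_
    obtain ⟨w, hwK, hw⟩ := exists_mem_Ioo_right hK g (heq ▸ h.left_lt_right)
    exact h.notMem_of_mem_Ioo (heq ▸ hw) hwK
  obtain ⟨w, hwK, hw⟩ := exists_mem_Ioo_right hK g hlt
  obtain ⟨x, hx, hxS⟩ := mem_closure_iff.mp (hS hwK) _ isOpen_Ioo hw
  obtain ⟨m, hm, hxm⟩ := exists_mem_of_mem_endpoints hxS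
  exact ⟨m, hm, lt_of_right_lt_right (hx.1.trans_le hxm.2),
    lt_iff_left_lt.mpr (hxm.1.trans_lt hx.2)⟩

theorem exists_mem_lt_of_notMem (hKa : ∀ x ∈ K, a ≤ x) (ha : a ∈ K)
    (hS : K ⊆ closure (endpoints S)) {g : Gap K} (hg : g ∉ S) : ∃ m ∈ S, m < g := by
  obtain ⟨x, hx, hxS⟩ := mem_closure_iff.mp (hS ha) _ isOpen_Iio
    ((hKa _ g.left_mem).trans_lt g.left_lt_right)
  obtain ⟨m, hm, hxm⟩ := exists_mem_of_mem_endpoints hxS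
  refine ⟨m, hm, lt_of_le_of_ne (le_of_not_gt fun hgm => ?_) (ne_of_mem_of_not_mem hm hg)⟩
  exact (lt_iff_right_le_left.mp hgm).not_gt (hxm.1.trans_lt hx)

theorem exists_mem_gt_of_notMem (hKb : ∀ x ∈ K, x ≤ b) (hb : b ∈ K)
    (hS : K ⊆ closure (endpoints S)) {g : Gap K} (hg : g ∉ S) : ∃ m ∈ S, g < m := by
  obtain ⟨x, hx, hxS⟩ := mem_closure_iff.mp (hS hb) _ isOpen_Ioi
    (g.left_lt_right.trans_le (hKb _ g.right_mem))
  obtain ⟨m, hm, hxm⟩ := exists_mem_of_mem_endpoints hxS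
  refine ⟨m, hm, lt_of_le_of_ne (le_of_not_gt fun hmg => ?_) (ne_of_mem_of_not_mem hm hg).symm⟩
  exact (lt_iff_right_le_left.mp hmg).not_gt (hx.trans_le hxm.2)

theorem isDenseColoring {κ : Type*} [Nontrivial κ] (hK : Perfect K) (hKab : K ⊆ Icc a b)
    (ha : a ∈ K) (hb : b ∈ K) {c : Gap K → κ} (hc : ∀ k, K ⊆ closure (endpoints (c ⁻¹' {k}))) :
    IsDenseColoring c := by
  have hlt (k : κ) (g : Gap K) : ∃ m, c m = k ∧ m < g := by
    by_cases hg : c g = k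
    -- first a gap of another colour below `g`, then one of colour `k` between the two
    · obtain ⟨k', hk'⟩ := exists_ne k
      obtain ⟨m', hm', hm'g⟩ := exists_mem_lt_of_notMem (fun x hx => (hKab hx).1) ha (hc k')
        (show c g ≠ k' from hg ▸ hk'.symm)
      obtain ⟨m, hm, -, hmg⟩ := exists_mem_between hK (hc k) hm'g
      exact ⟨m, hm, hmg⟩
    · exact exists_mem_lt_of_notMem (fun x hx => (hKab hx).1) ha (hc k) hg
  have hgt (k : κ) (g : Gap K) : ∃ m, c m = k ∧ g < m := by
    by_cases hg : c g = k
    · obtain ⟨k', hk'⟩ := exists_ne k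
      obtain ⟨m', hm', hgm'⟩ := exists_mem_gt_of_notMem (fun x hx => (hKab hx).2) hb (hc k')
        (show c g ≠ k' from hg ▸ hk'.symm)
      obtain ⟨m, hm, hgm, -⟩ := exists_mem_between hK (hc k) hgm'
      exact ⟨m, hm, hgm⟩
    · exact exists_mem_gt_of_notMem (fun x hx => (hKab hx).2) hb (hc k) hg
  exact ⟨fun k _ _ hgh => exists_mem_between hK (hc k) hgh, hlt, hgt⟩

theorem subset_closure_endpoints {F : ℕ → Set ℝ} (hF : ∀ i, ∃ g ∈ S, F i = Ioo g.left g.right)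
    (hdense : closure (⋃ i, frontier (F i)) = K) : K ⊆ closure (endpoints S) := by
  refine hdense.symm.subset.trans (closure_mono (iUnion_subset fun i => ?_))
  obtain ⟨g, hg, hFg⟩ := hF i
  rw [hFg, frontier_Ioo g.left_lt_right]
  exact subset_biUnion_of_mem (u := fun g : Gap K => {g.left, g.right}) hg

open Classical in
theorem isDenseColoring_of_families (hK : Perfect K) (hKab : K ⊆ Icc a b) (ha : a ∈ K)
    (hb : b ∈ K) {I I' : ℕ → Set ℝ} (hI : ∀ i, ∃ g : Gap K, I i = Ioo g.left g.right)
    (hI' : ∀ i, ∃ g : Gap K, I' i = Ioo g.left g.right) (hdisj : ∀ i k, I i ∩ I' k = ∅)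
    (hdense : closure (⋃ i, frontier (I i)) = K) (hdense' : closure (⋃ i, frontier (I' i)) = K) :
    IsDenseColoring fun g : Gap K => decide (∃ i, Ioo g.left g.right = I i) := by
  refine isDenseColoring hK hKab ha hb fun k => ?_
  cases k
  · refine subset_closure_endpoints (fun i => ?_) hdense'
    obtain ⟨g, hg⟩ := hI' i
    refine ⟨g, decide_eq_false fun ⟨j, hj⟩ => ?_, hg⟩
    have hne : (I j ∩ I' i).Nonempty := by
      rw [← hj, hg, inter_self]
      exact nonempty_Ioo.mpr g.left_lt_right
    exact hne.ne_empty (hdisj j i)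
  · refine subset_closure_endpoints (fun i => ?_) hdense
    obtain ⟨g, hg⟩ := hI i
    exact ⟨g, decide_eq_true ⟨i, hg.symm⟩, hg⟩

variable {K₁ K₂ : Set ℝ}

noncomputable def affineMap (g : Gap K₁) (h : Gap K₂) (x : ℝ) : ℝ :=
  (h.right - h.left) / (g.right - g.left) * (x - g.left) + h.left

theorem affineMap_slope_pos (g : Gap K₁) (h : Gap K₂) :
    0 < (h.right - h.left) / (g.right - g.left) :=
  div_pos (sub_pos.mpr h.left_lt_right) (sub_pos.mpr g.left_lt_right)

theorem strictMono_affineMap (g : Gap K₁) (h : Gap K₂) : StrictMono (g.affineMap h) :=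
  fun x y hxy => by
    have := affineMap_slope_pos g h
    unfold affineMap
    gcongr

theorem image_affineMap_Ioo (g : Gap K₁) (h : Gap K₂) :
    g.affineMap h '' Ioo g.left g.right = Ioo h.left h.right := by
  set μ := (h.right - h.left) / (g.right - g.left)
  have hμ : μ * (g.right - g.left) = h.right - h.left :=
    div_mul_cancel₀ _ (sub_pos.mpr g.left_lt_right).ne'
  have : g.affineMap h = fun x => μ * x + (h.left - μ * g.left) := by
    funext x; simp only [affineMap, μ]; ring
  rw [this, image_affine_Ioo (affineMap_slope_pos g h)]
  congr 1
  · ring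
  · linear_combination hμ

theorem affineMap_mem_Ioo (g : Gap K₁) (h : Gap K₂) {x : ℝ} (hx : x ∈ Ioo g.left g.right) :
    g.affineMap h x ∈ Ioo h.left h.right :=
  image_affineMap_Ioo g h ▸ mem_image_of_mem _ hx

open Classical in
noncomputable def gapMap (e : Gap K₁ → Gap K₂) (x : ℝ) : ℝ :=
  if hx : ∃ g : Gap K₁, x ∈ Ioo g.left g.right then hx.choose.affineMap (e hx.choose) x else x

theorem gapMap_eq (e : Gap K₁ → Gap K₂) {g : Gap K₁} {x : ℝ} (hx : x ∈ Ioo g.left g.right) :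
    gapMap e x = g.affineMap (e g) x := by
  have hex : ∃ g : Gap K₁, x ∈ Ioo g.left g.right := ⟨g, hx⟩
  rw [gapMap, dif_pos hex, eq_of_mem_Ioo hex.choose_spec hx]

theorem image_gapMap_Ioo (e : Gap K₁ → Gap K₂) (g : Gap K₁) :
    gapMap e '' Ioo g.left g.right = Ioo (e g).left (e g).right := by
  rw [← image_affineMap_Ioo g (e g)]
  exact image_congr fun x hx => gapMap_eq e hx

theorem strictMonoOn_gapMap {e : Gap K₁ → Gap K₂} (he : StrictMono e) :
    StrictMonoOn (gapMap e) (⋃ g : Gap K₁, Ioo g.left g.right) := by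
  intro x hx y hy hxy
  obtain ⟨g, hxg⟩ := mem_iUnion.mp hx
  obtain ⟨h, hyh⟩ := mem_iUnion.mp hy
  rw [gapMap_eq e hxg, gapMap_eq e hyh]
  rcases lt_trichotomy g h with hgh | rfl | hhg
  · calc g.affineMap (e g) x < (e g).right := (affineMap_mem_Ioo g (e g) hxg).2
      _ ≤ (e h).left := lt_iff_right_le_left.mp (he hgh)
      _ < h.affineMap (e h) y := (affineMap_mem_Ioo h (e h) hyh).1
  · exact strictMono_affineMap g (e g) hxy
  · exact absurd ((lt_iff_right_le_left.mp hhg).trans_lt hxg.1) (hxy.trans hyh.2).not_gt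

theorem image_gapMap_iUnion (e : Gap K₁ ≃o Gap K₂) :
    gapMap e '' ⋃ g : Gap K₁, Ioo g.left g.right = ⋃ h : Gap K₂, Ioo h.left h.right := by
  rw [image_iUnion]
  simp_rw [image_gapMap_Ioo]
  exact e.surjective.iUnion_comp fun h => Ioo h.left h.right

theorem image_iUnion_eq_iUnion {e : Gap K₁ ≃o Gap K₂} {ψ : ℝ → ℝ}
    (hψ : EqOn ψ (gapMap e) (⋃ g : Gap K₁, Ioo g.left g.right)) {I J : ℕ → Set ℝ}
    (hI : ∀ i, ∃ g : Gap K₁, I i = Ioo g.left g.right)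
    (hJ : ∀ j, ∃ h : Gap K₂, J j = Ioo h.left h.right)
    (he : ∀ g, (∃ j, Ioo (e g).left (e g).right = J j) ↔ ∃ i, Ioo g.left g.right = I i) :
    ψ '' ⋃ i, I i = ⋃ j, J j := by
  have hψg (g : Gap K₁) : ψ '' Ioo g.left g.right = Ioo (e g).left (e g).right := by
    rw [← image_gapMap_Ioo e g]
    exact (hψ.mono (subset_iUnion (fun g : Gap K₁ => Ioo g.left g.right) g)).image_eq
  rw [iUnion_eq_biUnion hI, iUnion_eq_biUnion hJ, image_iUnion₂]
  simp_rw [hψg, ← he]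
  exact e.surjective.iUnion_comp fun h => ⋃ (_ : ∃ j, Ioo h.left h.right = J j), Ioo h.left h.right

end Gap

theorem stmt17_general (a b c d : ℝ) (K₁ K₂ : Set ℝ)
    (hK₁ : IsCantorSet K₁) (hK₂ : IsCantorSet K₂)
    (hK₁sub : K₁ ⊆ Set.Icc a b) (hK₂sub : K₂ ⊆ Set.Icc c d)
    (ha : a ∈ K₁) (hb : b ∈ K₁) (hc : c ∈ K₂) (hd : d ∈ K₂)
    (I I' : ℕ → Set ℝ) (J J' : ℕ → Set ℝ)
    (hIcomp : ∀ i, ∃ x ∈ Set.Icc a b \ K₁, I i = connectedComponentIn (Set.Icc a b \ K₁) x)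
    (hI'comp : ∀ i, ∃ x ∈ Set.Icc a b \ K₁, I' i = connectedComponentIn (Set.Icc a b \ K₁) x)
    (hIdisj : ∀ i k, I i ∩ I' k = ∅)
    (hIdense : closure (⋃ i, frontier (I i)) = K₁)
    (hI'dense : closure (⋃ i, frontier (I' i)) = K₁)
    (hJcomp : ∀ j, ∃ x ∈ Set.Icc c d \ K₂, J j = connectedComponentIn (Set.Icc c d \ K₂) x)
    (hJ'comp : ∀ j, ∃ x ∈ Set.Icc c d \ K₂, J' j = connectedComponentIn (Set.Icc c d \ K₂) x)
    (hJdisj : ∀ j k, J j ∩ J' k = ∅)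
    (hJdense : closure (⋃ j, frontier (J j)) = K₂)
    (hJ'dense : closure (⋃ j, frontier (J' j)) = K₂) :
    ∃ ψ : ℝ → ℝ, ContinuousOn ψ (Set.Icc a b) ∧ StrictMonoOn ψ (Set.Icc a b) ∧
      ψ '' Set.Icc a b = Set.Icc c d ∧ ψ '' K₁ = K₂ ∧
      ψ '' (⋃ i, I i) = ⋃ j, J j := by
  obtain ⟨-, -, hK₁perf, hK₁td⟩ := hK₁
  obtain ⟨-, -, hK₂perf, hK₂td⟩ := hK₂
  have hI i := Gap.exists_eq_Ioo hK₁perf.closed hK₁sub ha hb (hIcomp i)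
  have hI' i := Gap.exists_eq_Ioo hK₁perf.closed hK₁sub ha hb (hI'comp i)
  have hJ j := Gap.exists_eq_Ioo hK₂perf.closed hK₂sub hc hd (hJcomp j)
  have hJ' j := Gap.exists_eq_Ioo hK₂perf.closed hK₂sub hc hd (hJ'comp j)
  have := Gap.nonempty hK₁perf hK₁td hK₁sub ha hb
  have := Gap.nonempty hK₂perf hK₂td hK₂sub hc hd
  obtain ⟨e, he⟩ := exists_orderIso_of_isDenseColoring
    (Gap.isDenseColoring_of_families hK₁perf hK₁sub ha hb hI hI' hIdisj hIdense hI'dense)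
    (Gap.isDenseColoring_of_families hK₂perf hK₂sub hc hd hJ hJ' hJdisj hJdense hJ'dense)
  have hU₁ := Gap.iUnion_Ioo hK₁perf.closed hK₁sub ha hb
  have hU₂ := Gap.iUnion_Ioo hK₂perf.closed hK₂sub hc hd
  have hf : StrictMonoOn (Gap.gapMap e) (Icc a b \ K₁) :=
    hU₁ ▸ Gap.strictMonoOn_gapMap e.strictMono
  have himg : Gap.gapMap e '' (Icc a b \ K₁) = Icc c d \ K₂ :=
    hU₁ ▸ hU₂ ▸ Gap.image_gapMap_iUnion e
  have hfs : Gap.gapMap e '' (Icc a b \ K₁) ⊆ Icc c d := himg ▸ sdiff_subset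
  have hψ := strictMonoOn_supExtension (hK₂sub hc).2 sdiff_subset hf hfs
    fun x hx y hy => Icc_diff_inter_Ioo_nonempty hK₁td hx hy
  have hψimg := image_supExtension_Icc (hK₁sub ha).2 (hK₂sub hc).2 sdiff_subset hf hfs
    (himg ▸ fun x hx y hy => Icc_diff_inter_Ioo_nonempty hK₂td hx hy)
  have hψf := eqOn_supExtension (c := c) hf.monotoneOn hfs
  exact ⟨_, hψ.continuousOn_Icc_of_image_eq hψimg, hψ, hψimg,
    hψ.injOn.image_eq_of_image_sdiff hK₁sub hK₂sub hψimg (hψf.image_eq.trans himg),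
    Gap.image_iUnion_eq_iUnion (hU₁ ▸ hψf) hI hJ fun g => decide_eq_decide.mp (he g)⟩

theorem stmt17 (a b c d : ℝ) (K₁ K₂ : Set ℝ)
    (hK₁ : IsCantorSet K₁) (hK₂ : IsCantorSet K₂)
    (hK₁sub : K₁ ⊆ Set.Icc a b) (hK₂sub : K₂ ⊆ Set.Icc c d)
    (ha : a ∈ K₁) (hb : b ∈ K₁) (hc : c ∈ K₂) (hd : d ∈ K₂)
    (I I' : ℕ → Set ℝ) (J J' : ℕ → Set ℝ)
    (hIcomp : ∀ i, ∃ x ∈ Set.Icc a b \ K₁, I i = connectedComponentIn (Set.Icc a b \ K₁) x)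
    (hI'comp : ∀ i, ∃ x ∈ Set.Icc a b \ K₁, I' i = connectedComponentIn (Set.Icc a b \ K₁) x)
    (hIcover : ∀ x ∈ Set.Icc a b \ K₁,
      (∃ i, connectedComponentIn (Set.Icc a b \ K₁) x = I i) ∨
      (∃ i, connectedComponentIn (Set.Icc a b \ K₁) x = I' i))
    (hIdisj : ∀ i k, I i ∩ I' k = ∅)
    (hIdense : closure (⋃ i, frontier (I i)) = K₁)
    (hI'dense : closure (⋃ i, frontier (I' i)) = K₁)
    (hJcomp : ∀ j, ∃ x ∈ Set.Icc c d \ K₂, J j = connectedComponentIn (Set.Icc c d \ K₂) x)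
    (hJ'comp : ∀ j, ∃ x ∈ Set.Icc c d \ K₂, J' j = connectedComponentIn (Set.Icc c d \ K₂) x)
    (hJcover : ∀ x ∈ Set.Icc c d \ K₂,
      (∃ j, connectedComponentIn (Set.Icc c d \ K₂) x = J j) ∨
      (∃ j, connectedComponentIn (Set.Icc c d \ K₂) x = J' j))
    (hJdisj : ∀ j k, J j ∩ J' k = ∅)
    (hJdense : closure (⋃ j, frontier (J j)) = K₂)
    (hJ'dense : closure (⋃ j, frontier (J' j)) = K₂) :
    ∃ ψ : ℝ → ℝ, ContinuousOn ψ (Set.Icc a b) ∧ StrictMonoOn ψ (Set.Icc a b) ∧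
      ψ '' Set.Icc a b = Set.Icc c d ∧ ψ '' K₁ = K₂ ∧
      ψ '' (⋃ i, I i) = ⋃ j, J j :=
  stmt17_general a b c d K₁ K₂ hK₁ hK₂ hK₁sub hK₂sub ha hb hc hd I I' J J' hIcomp hI'comp hIdisj
    hIdense hI'dense hJcomp hJ'comp hJdisj hJdense hJ'dense
end
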